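/- arXiv:2108.04303 — 8 statements merged into one kernel-verified Lean document; each statement's English description precedes it below -/
import Mathlib

section
/- A function f:[0,1]→[0,1] is a tradeoff function (i.e., equals T(P,Q) for some pair of probability distributions P,Q on a common space, where T(P,Q)(α) = inf{1 − E_Q φ : E_P φ ≤ α} over measurable tests φ:X→[0,1]) if and only if f is convex, continuous, decreasing, and f(x) ≤ 1 − x for all x ∈ [0,1]. -/
open MeasureTheory Set

/-- The tradeoff function `T(P,Q)(α) = inf {1 - E_Q φ : φ measurable test, E_P φ ≤ α}`. -/
noncomputable def tradeoff {Ω : Type*} [MeasurableSpace Ω] (P Q : Measure Ω) (α : ℝ) : ℝ :=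
  sInf {β : ℝ | ∃ φ : Ω → ℝ, Measurable φ ∧ (∀ ω, φ ω ∈ Icc (0:ℝ) 1) ∧
    (∫ ω, φ ω ∂P) ≤ α ∧ β = 1 - ∫ ω, φ ω ∂Q}

/-- `f` is a tradeoff function: convex, continuous, decreasing, `f ≤ 1 - id`, with values in `[0,1]`. -/
structure IsTradeoffFn (f : ℝ → ℝ) : Prop where
  maps : ∀ x ∈ Icc (0:ℝ) 1, f x ∈ Icc (0:ℝ) 1
  convex : ConvexOn ℝ (Icc (0:ℝ) 1) f
  cont : ContinuousOn f (Icc (0:ℝ) 1)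
  anti : AntitoneOn f (Icc (0:ℝ) 1)
  le_one_sub : ∀ x ∈ Icc (0:ℝ) 1, f x ≤ 1 - x

/-- Generalized inverse of a tradeoff function: `f⁻¹(α) = inf {t ∈ [0,1] : f t ≤ α}`. -/
noncomputable def tfInv (f : ℝ → ℝ) (α : ℝ) : ℝ := sInf {t ∈ Icc (0:ℝ) 1 | f t ≤ α}

/-- A tradeoff function is symmetric if it equals its generalized inverse. -/
def SymmTF (f : ℝ → ℝ) : Prop := ∀ α ∈ Icc (0:ℝ) 1, f α = tfInv f α

/-- A tradeoff function is nontrivial if `f α < 1 - α` somewhere on `(0,1)`. -/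
def NontrivialTF (f : ℝ → ℝ) : Prop := ∃ α ∈ Ioo (0:ℝ) 1, f α < 1 - α

/-- The cumulative distribution function of a measure on `ℝ`. -/
noncomputable def rcdf (μ : Measure ℝ) (x : ℝ) : ℝ := (μ (Iic x)).toReal

/-- The quantile (generalized inverse) of a cdf: `F⁻¹(p) = inf {x : p ≤ F x}`. -/
noncomputable def quantileFn (F : ℝ → ℝ) (p : ℝ) : ℝ := sInf {x : ℝ | p ≤ F x}

/-- The Bernoulli distribution on `Bool` with success probability `p`. -/
noncomputable def bern (p : ℝ) : Measure Bool :=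
  ENNReal.ofReal p • Measure.dirac true + ENNReal.ofReal (1 - p) • Measure.dirac false

/-- `μ` (with cdf `F = rcdf μ`) is a canonical noise distribution for `f`:
(1) `T(F(·),F(·-m)) ≥ f` for all `m ∈ [0,1]`;
(2) `f = T(F(·),F(·-1))` on `(0,1)`;
(3) `T(F(·),F(·-1))(α) = F(F⁻¹(1-α)-1)` on `(0,1)`;
(4) `F(x) = 1 - F(-x)`; and `F` is continuous. -/
structure IsCND (f : ℝ → ℝ) (μ : Measure ℝ) : Prop where
  prob : IsProbabilityMeasure μ
  cont : Continuous (rcdf μ)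
  dp : ∀ m ∈ Icc (0:ℝ) 1, ∀ α ∈ Icc (0:ℝ) 1, f α ≤ tradeoff μ (μ.map (· + m)) α
  tight : ∀ α ∈ Ioo (0:ℝ) 1, f α = tradeoff μ (μ.map (· + 1)) α
  closedForm : ∀ α ∈ Ioo (0:ℝ) 1,
    tradeoff μ (μ.map (· + 1)) α = rcdf μ (quantileFn (rcdf μ) (1 - α) - 1)
  symm : ∀ x : ℝ, rcdf μ x = 1 - rcdf μ (-x)

/-- `F` satisfies the defining clauses of the CND construction `F_f`: linear with slopes
determined by the fixed point `c` on `[-1/2,1/2]`, and the recurrences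
`F(x) = 1 - f(F(x-1))` for `x > 1/2`, `F(x) = f(1 - F(x+1))` for `x < -1/2`. -/
def IsFfCon (f : ℝ → ℝ) (c : ℝ) (F : ℝ → ℝ) : Prop :=
  (∀ x ∈ Icc (-(1/2) : ℝ) (1/2), F x = c * (1/2 - x) + (1 - c) * (x + 1/2)) ∧
  (∀ x : ℝ, 1/2 < x → F x = 1 - f (F (x - 1))) ∧
  (∀ x : ℝ, x < -(1/2) → F x = f (1 - F (x + 1)))

/-- `F : ℝ → ℝ` is a cumulative distribution function. -/
structure IsCDF (F : ℝ → ℝ) : Prop where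
  mono : Monotone F
  rightCont : ∀ x, ContinuousWithinAt F (Ici x) x
  tendsto_bot : Filter.Tendsto F Filter.atBot (nhds 0)
  tendsto_top : Filter.Tendsto F Filter.atTop (nhds 1)

section TradeoffProof

namespace TradeoffAux
open Filter Topology ENNReal

variable {Ω : Type*} [MeasurableSpace Ω] {P Q : Measure Ω}

open Filter Topology

variable {Ω : Type*} [MeasurableSpace Ω] {P Q : Measure Ω}

/-- The defining set of the tradeoff infimum. -/
def TS (P Q : Measure Ω) (α : ℝ) : Set ℝ :=
  {β : ℝ | ∃ φ : Ω → ℝ, Measurable φ ∧ (∀ ω, φ ω ∈ Icc (0:ℝ) 1) ∧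
    (∫ ω, φ ω ∂P) ≤ α ∧ β = 1 - ∫ ω, φ ω ∂Q}

lemma tradeoff_eq_sInf (α : ℝ) : tradeoff P Q α = sInf (TS P Q α) := rfl

lemma test_integrable (μ : Measure Ω) [IsFiniteMeasure μ] {φ : Ω → ℝ}
    (hm : Measurable φ) (hr : ∀ ω, φ ω ∈ Icc (0:ℝ) 1) : Integrable φ μ := by
  refine Integrable.mono' (integrable_const 1) hm.aestronglyMeasurable ?_
  exact ae_of_all _ fun ω => by
    rw [Real.norm_eq_abs, abs_le]; exact ⟨by linarith [(hr ω).1], (hr ω).2⟩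

lemma test_int_nonneg (μ : Measure Ω) {φ : Ω → ℝ} (hr : ∀ ω, φ ω ∈ Icc (0:ℝ) 1) :
    0 ≤ ∫ ω, φ ω ∂μ := integral_nonneg fun ω => (hr ω).1

lemma test_int_le_one (μ : Measure Ω) [IsProbabilityMeasure μ] {φ : Ω → ℝ}
    (hm : Measurable φ) (hr : ∀ ω, φ ω ∈ Icc (0:ℝ) 1) : (∫ ω, φ ω ∂μ) ≤ 1 := by
  calc (∫ ω, φ ω ∂μ) ≤ ∫ _, (1:ℝ) ∂μ :=
        integral_mono (test_integrable μ hm hr) (integrable_const 1) fun ω => (hr ω).2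
    _ = 1 := by simp

lemma TS_subset_Ici [IsProbabilityMeasure Q] (α : ℝ) : TS P Q α ⊆ Ici (0:ℝ) := by
  rintro β ⟨φ, hm, hr, _, rfl⟩
  have := test_int_le_one Q hm hr
  simp only [mem_Ici]; linarith

lemma TS_bddBelow [IsProbabilityMeasure Q] (α : ℝ) : BddBelow (TS P Q α) :=
  ⟨0, fun β hβ => TS_subset_Ici α hβ⟩

lemma one_mem_TS (α : ℝ) (hα : 0 ≤ α) : (1:ℝ) ∈ TS P Q α := by
  refine ⟨fun _ => 0, measurable_const, fun ω => by simp, by simpa using hα, by simp⟩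

lemma mem_TS {α : ℝ} {φ : Ω → ℝ} (hm : Measurable φ) (hr : ∀ ω, φ ω ∈ Icc (0:ℝ) 1)
    (hP : (∫ ω, φ ω ∂P) ≤ α) : (1 - ∫ ω, φ ω ∂Q) ∈ TS P Q α :=
  ⟨φ, hm, hr, hP, rfl⟩

lemma tradeoff_le_test [IsProbabilityMeasure Q] {α : ℝ} {φ : Ω → ℝ}
    (hm : Measurable φ) (hr : ∀ ω, φ ω ∈ Icc (0:ℝ) 1) (hP : (∫ ω, φ ω ∂P) ≤ α) :
    tradeoff P Q α ≤ 1 - ∫ ω, φ ω ∂Q :=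
  csInf_le (TS_bddBelow α) (mem_TS hm hr hP)

lemma le_tradeoff {α : ℝ} (hα : 0 ≤ α) {c : ℝ}
    (h : ∀ φ : Ω → ℝ, Measurable φ → (∀ ω, φ ω ∈ Icc (0:ℝ) 1) → (∫ ω, φ ω ∂P) ≤ α →
      c ≤ 1 - ∫ ω, φ ω ∂Q) : c ≤ tradeoff P Q α := by
  refine le_csInf ⟨1, one_mem_TS α hα⟩ ?_
  rintro β ⟨φ, hm, hr, hP, rfl⟩
  exact h φ hm hr hP

lemma tradeoff_nonneg [IsProbabilityMeasure Q] {α : ℝ} (hα : 0 ≤ α) :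
    0 ≤ tradeoff P Q α :=
  le_tradeoff hα fun φ hm hr _ => by linarith [test_int_le_one Q hm hr]

lemma tradeoff_le_one_sub [IsProbabilityMeasure P] [IsProbabilityMeasure Q]
    {α : ℝ} (hα : α ∈ Icc (0:ℝ) 1) : tradeoff P Q α ≤ 1 - α := by
  have h := tradeoff_le_test (P := P) (Q := Q) (α := α) (φ := fun _ => α)
    measurable_const (fun ω => hα) (by simp)
  simpa using h

lemma tradeoff_antitoneOn [IsProbabilityMeasure Q] :
    AntitoneOn (tradeoff P Q) (Icc (0:ℝ) 1) := by
  intro a ha b hb hab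
  refine csInf_le_csInf (TS_bddBelow b) ⟨1, one_mem_TS a ha.1⟩ ?_
  rintro β ⟨φ, hm, hr, hP, rfl⟩
  exact ⟨φ, hm, hr, hP.trans hab, rfl⟩

lemma tradeoff_one [IsProbabilityMeasure P] [IsProbabilityMeasure Q] :
    tradeoff P Q 1 = 0 := by
  have h1 : tradeoff P Q 1 ≤ 0 := by
    have h := tradeoff_le_test (P := P) (Q := Q) (α := 1) (φ := fun _ => 1)
      measurable_const (fun ω => by simp) (by simp)
    simpa using h
  exact le_antisymm h1 (tradeoff_nonneg zero_le_one)

lemma tradeoff_convexOn [IsProbabilityMeasure P] [IsProbabilityMeasure Q] :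
    ConvexOn ℝ (Icc (0:ℝ) 1) (tradeoff P Q) := by
  refine ⟨convex_Icc _ _, ?_⟩
  intro x hx y hy a b ha hb hab
  simp only [smul_eq_mul]
  rcases eq_or_lt_of_le ha with rfl | ha'
  · have hb1 : b = 1 := by linarith
    subst hb1; simp
  rcases eq_or_lt_of_le hb with rfl | hb'
  · have ha1 : a = 1 := by linarith
    subst ha1; simp
  have key : ∀ βx ∈ TS P Q x, ∀ βy ∈ TS P Q y,
      tradeoff P Q (a * x + b * y) ≤ a * βx + b * βy := by
    rintro _ ⟨φ₁, hm1, hr1, hP1, rfl⟩ _ ⟨φ₂, hm2, hr2, hP2, rfl⟩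
    have hm : Measurable (fun ω => a * φ₁ ω + b * φ₂ ω) :=
      ((hm1.const_mul a).add (hm2.const_mul b))
    have hr : ∀ ω, (a * φ₁ ω + b * φ₂ ω) ∈ Icc (0:ℝ) 1 := fun ω => by
      constructor
      · have := (hr1 ω).1; have := (hr2 ω).1; positivity
      · have h1 := (hr1 ω).2; have h2 := (hr2 ω).2
        nlinarith [(hr1 ω).1, (hr2 ω).1]
    have hsum : ∀ (μ : Measure Ω) [IsFiniteMeasure μ],
        (∫ ω, (a * φ₁ ω + b * φ₂ ω) ∂μ) = a * (∫ ω, φ₁ ω ∂μ) + b * ∫ ω, φ₂ ω ∂μ := by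
      intro μ _
      rw [integral_add ((test_integrable μ hm1 hr1).const_mul a)
        ((test_integrable μ hm2 hr2).const_mul b), integral_const_mul, integral_const_mul]
    have hPle : (∫ ω, (a * φ₁ ω + b * φ₂ ω) ∂P) ≤ a * x + b * y := by
      rw [hsum P]
      exact add_le_add (mul_le_mul_of_nonneg_left hP1 ha) (mul_le_mul_of_nonneg_left hP2 hb)
    have := tradeoff_le_test (P := P) (Q := Q) hm hr hPle
    rw [hsum Q] at this
    nlinarith [this]
  have h1 : ∀ βx ∈ TS P Q x, tradeoff P Q (a * x + b * y) - a * βx ≤ b * tradeoff P Q y := by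
    intro βx hβx
    have hdiv : (tradeoff P Q (a * x + b * y) - a * βx) / b ≤ sInf (TS P Q y) := by
      refine le_csInf ⟨1, one_mem_TS y hy.1⟩ fun βy hβy => ?_
      rw [div_le_iff₀ hb']
      have := key βx hβx βy hβy
      linarith
    rw [tradeoff_eq_sInf]
    calc tradeoff P Q (a * x + b * y) - a * βx
        = b * ((tradeoff P Q (a * x + b * y) - a * βx) / b) := by field_simp
      _ ≤ b * sInf (TS P Q y) := mul_le_mul_of_nonneg_left hdiv hb'.le
  have h2 : tradeoff P Q (a * x + b * y) - b * tradeoff P Q y ≤ a * tradeoff P Q x := by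
    have hdiv : (tradeoff P Q (a * x + b * y) - b * tradeoff P Q y) / a ≤ sInf (TS P Q x) := by
      refine le_csInf ⟨1, one_mem_TS x hx.1⟩ fun βx hβx => ?_
      rw [div_le_iff₀ ha']
      have := h1 βx hβx
      linarith
    rw [tradeoff_eq_sInf]
    calc tradeoff P Q (a * x + b * y) - b * tradeoff P Q y
        = a * ((tradeoff P Q (a * x + b * y) - b * tradeoff P Q y) / a) := by field_simp
      _ ≤ a * sInf (TS P Q x) := mul_le_mul_of_nonneg_left hdiv ha'.le
  linarith

lemma tradeoff_cont_at_zero [IsProbabilityMeasure P] [IsProbabilityMeasure Q] :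
    ∀ ε > 0, ∃ δ > 0, ∀ α : ℝ, 0 < α → α < δ → tradeoff P Q 0 - ε < tradeoff P Q α := by
  by_contra hcon
  push_neg at hcon
  obtain ⟨ε, hε, hcon⟩ := hcon
  set c := tradeoff P Q 0 with hc
  have hsel : ∀ n : ℕ, ∃ φ : Ω → ℝ, Measurable φ ∧ (∀ ω, φ ω ∈ Icc (0:ℝ) 1) ∧
      (∫ ω, φ ω ∂P) ≤ (1/2)^n ∧ 1 - (∫ ω, φ ω ∂Q) < c - ε/2 := by
    intro n
    obtain ⟨α, hα0, hαδ, hTα⟩ := hcon ((1/2)^n) (by positivity)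
    have hlt : sInf (TS P Q α) < c - ε/2 := by
      rw [← tradeoff_eq_sInf]; linarith
    obtain ⟨β, hβmem, hβlt⟩ := exists_lt_of_csInf_lt ⟨1, one_mem_TS α hα0.le⟩ hlt
    obtain ⟨φ, hm, hr, hPφ, rfl⟩ := hβmem
    exact ⟨φ, hm, hr, hPφ.trans hαδ.le, hβlt⟩
  choose φ hm hr hPφ hQφ using hsel
  set Φ : ℕ → Ω → ℝ≥0∞ := fun n ω => ENNReal.ofReal (φ n ω) with hΦ
  have hΦm : ∀ n, Measurable (Φ n) := fun n => (hm n).ennreal_ofReal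
  have hΦ1 : ∀ n ω, Φ n ω ≤ 1 := fun n ω => by
    rw [hΦ]; exact ENNReal.ofReal_le_one.mpr (hr n ω).2
  have hΦP : ∀ n, (∫⁻ ω, Φ n ω ∂P) ≤ ENNReal.ofReal ((1/2)^n) := by
    intro n
    rw [hΦ]
    rw [← ofReal_integral_eq_lintegral_ofReal (test_integrable P (hm n) (hr n))
      (ae_of_all _ fun ω => (hr n ω).1)]
    exact ENNReal.ofReal_le_ofReal (hPφ n)
  set Ψ : ℕ → Ω → ℝ≥0∞ := fun N ω => ⨆ n, Φ (N + n) ω with hΨ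
  have hΨm : ∀ N, Measurable (Ψ N) := fun N => Measurable.iSup fun n => hΦm (N + n)
  have hΨ1 : ∀ N ω, Ψ N ω ≤ 1 := fun N ω => iSup_le fun n => hΦ1 _ ω
  have hΨanti : Antitone Ψ := by
    intro N M hNM ω
    refine iSup_le fun n => ?_
    have hidx : M + n = N + (M - N + n) := by omega
    rw [hidx]
    exact le_iSup (fun k => Φ (N + k) ω) _
  have htsum : ∀ N : ℕ, (∑' (n : ℕ), ENNReal.ofReal ((1/2 : ℝ)^(N + n)))
      = ENNReal.ofReal (2 * (1/2)^N) := by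
    intro N
    rw [← ENNReal.ofReal_tsum_of_nonneg (fun n => by positivity)]
    · congr 1
      have : ∀ n : ℕ, (1/2 : ℝ)^(N+n) = (1/2)^N * (1/2)^n := fun n => pow_add _ _ _
      rw [tsum_congr this, tsum_mul_left, tsum_geometric_of_lt_one (by norm_num) (by norm_num)]
      ring
    · have : Summable (fun n : ℕ => (1/2 : ℝ)^N * (1/2)^n) :=
        (summable_geometric_of_lt_one (by norm_num) (by norm_num)).mul_left _
      exact this.congr fun n => by rw [← pow_add]
  have hΨP : ∀ N, (∫⁻ ω, Ψ N ω ∂P) ≤ ENNReal.ofReal (2 * (1/2)^N) := by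
    intro N
    calc (∫⁻ ω, Ψ N ω ∂P) ≤ ∫⁻ ω, ∑' n, Φ (N + n) ω ∂P :=
          lintegral_mono fun ω => iSup_le fun n => ENNReal.le_tsum n
      _ = ∑' n, ∫⁻ ω, Φ (N + n) ω ∂P := lintegral_tsum fun n => (hΦm _).aemeasurable
      _ ≤ ∑' n, ENNReal.ofReal ((1/2)^(N+n)) := ENNReal.tsum_le_tsum fun n => hΦP _
      _ = ENNReal.ofReal (2 * (1/2)^N) := htsum N
  set Ψi : Ω → ℝ≥0∞ := fun ω => ⨅ N, Ψ N ω with hΨi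
  have hΨim : Measurable Ψi := Measurable.iInf fun N => hΨm N
  have hΨi1 : ∀ ω, Ψi ω ≤ 1 := fun ω => (iInf_le _ 0).trans (hΨ1 0 ω)
  have hΨiP : (∫⁻ ω, Ψi ω ∂P) = 0 := by
    refine le_antisymm ?_ zero_le
    have hble : ∀ N, (∫⁻ ω, Ψi ω ∂P) ≤ ENNReal.ofReal (2 * (1/2)^N) :=
      fun N => (lintegral_mono fun ω => iInf_le _ N).trans (hΨP N)
    have htend : Filter.Tendsto (fun N : ℕ => ENNReal.ofReal (2 * (1/2)^N))
        Filter.atTop (nhds 0) := by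
      have h2 : Filter.Tendsto (fun N : ℕ => 2 * (1/2 : ℝ)^N) Filter.atTop (nhds 0) := by
        have := tendsto_pow_atTop_nhds_zero_of_lt_one (by norm_num : (0:ℝ) ≤ 1/2)
          (by norm_num : (1/2 : ℝ) < 1)
        simpa using this.const_mul 2
      simpa only [ENNReal.ofReal_zero, Function.comp_def] using (ENNReal.continuous_ofReal.tendsto 0).comp h2
    exact ge_of_tendsto' htend hble
  set ψ : Ω → ℝ := fun ω => (Ψi ω).toReal with hψ
  have hψm : Measurable ψ := hΨim.ennreal_toReal
  have hψr : ∀ ω, ψ ω ∈ Icc (0:ℝ) 1 := fun ω =>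
    ⟨ENNReal.toReal_nonneg, by
      have := hΨi1 ω
      calc (Ψi ω).toReal ≤ (1 : ℝ≥0∞).toReal := ENNReal.toReal_mono one_ne_top this
        _ = 1 := by simp⟩
  have hofReal : ∀ ω, ENNReal.ofReal (ψ ω) = Ψi ω := fun ω =>
    ENNReal.ofReal_toReal (((hΨi1 ω).trans_lt one_lt_top).ne)
  have hψP : (∫ ω, ψ ω ∂P) ≤ 0 := by
    rw [integral_eq_lintegral_of_nonneg_ae (ae_of_all _ fun ω => ENNReal.toReal_nonneg)
      hψm.aestronglyMeasurable]
    rw [show (∫⁻ a, ENNReal.ofReal (Ψi a).toReal ∂P) = ∫⁻ a, Ψi a ∂P from lintegral_congr hofReal]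
    simp only [hΨiP, ENNReal.toReal_zero, le_refl]
  have hfeas := tradeoff_le_test (P := P) (Q := Q) (α := 0) hψm hψr hψP
  -- lower bound on ∫ ψ dQ
  have hc1 : c ≤ 1 := by
    have := tradeoff_le_one_sub (P := P) (Q := Q) (α := 0) (by simp)
    simpa using this
  have hQN : ∀ N, ENNReal.ofReal (1 - c + ε/2) ≤ ∫⁻ ω, Ψ N ω ∂Q := by
    intro N
    have h1 : (∫⁻ ω, Φ N ω ∂Q) ≤ ∫⁻ ω, Ψ N ω ∂Q := by
      refine lintegral_mono fun ω => ?_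
      have : Φ N ω = Φ (N + 0) ω := by norm_num
      rw [this]
      exact le_iSup (fun n => Φ (N + n) ω) 0
    refine le_trans ?_ h1
    rw [hΦ, ← ofReal_integral_eq_lintegral_ofReal (test_integrable Q (hm N) (hr N))
      (ae_of_all _ fun ω => (hr N ω).1)]
    exact ENNReal.ofReal_le_ofReal (by linarith [hQφ N])
  have hQfin : (∫⁻ ω, Ψ 0 ω ∂Q) ≠ ⊤ := by
    refine ne_top_of_le_ne_top (by simp : (1 : ℝ≥0∞) ≠ ⊤) ?_
    calc (∫⁻ ω, Ψ 0 ω ∂Q) ≤ ∫⁻ _, 1 ∂Q := lintegral_mono fun ω => hΨ1 0 ω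
      _ = 1 := by simp
  have hQinf : ENNReal.ofReal (1 - c + ε/2) ≤ ∫⁻ ω, Ψi ω ∂Q := by
    rw [hΨi]
    rw [lintegral_iInf (fun N => hΨm N) hΨanti hQfin]
    exact le_iInf hQN
  have hψQ : 1 - c + ε/2 ≤ ∫ ω, ψ ω ∂Q := by
    rw [integral_eq_lintegral_of_nonneg_ae (ae_of_all _ fun ω => ENNReal.toReal_nonneg)
      hψm.aestronglyMeasurable]
    rw [show (∫⁻ a, ENNReal.ofReal (Ψi a).toReal ∂Q) = ∫⁻ a, Ψi a ∂Q from lintegral_congr hofReal]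
    have hfin : (∫⁻ ω, Ψi ω ∂Q) ≠ ⊤ := by
      refine ne_top_of_le_ne_top (by simp : (1 : ℝ≥0∞) ≠ ⊤) ?_
      calc (∫⁻ ω, Ψi ω ∂Q) ≤ ∫⁻ _, 1 ∂Q := lintegral_mono fun ω => hΨi1 ω
        _ = 1 := by simp
    calc 1 - c + ε/2 = (ENNReal.ofReal (1 - c + ε/2)).toReal := by
          rw [ENNReal.toReal_ofReal]; linarith
      _ ≤ (∫⁻ ω, Ψi ω ∂Q).toReal := ENNReal.toReal_mono hfin hQinf
  linarith

theorem forward_dir {f : ℝ → ℝ} [IsProbabilityMeasure P] [IsProbabilityMeasure Q]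
    (hf : ∀ α ∈ Icc (0:ℝ) 1, f α = tradeoff P Q α) :
    ConvexOn ℝ (Icc (0:ℝ) 1) f ∧ ContinuousOn f (Icc (0:ℝ) 1) ∧
      AntitoneOn f (Icc (0:ℝ) 1) ∧ ∀ x ∈ Icc (0:ℝ) 1, f x ≤ 1 - x := by
  have hconv : ConvexOn ℝ (Icc (0:ℝ) 1) f := by
    refine ⟨convex_Icc _ _, fun x hx y hy a b ha hb hab => ?_⟩
    have hmem : a • x + b • y ∈ Icc (0:ℝ) 1 := (convex_Icc 0 1) hx hy ha hb hab
    rw [hf _ hx, hf _ hy, hf _ hmem]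
    exact (tradeoff_convexOn (P := P) (Q := Q)).2 hx hy ha hb hab
  have hanti : AntitoneOn f (Icc (0:ℝ) 1) := fun x hx y hy hxy => by
    rw [hf _ hx, hf _ hy]; exact tradeoff_antitoneOn hx hy hxy
  have hle : ∀ x ∈ Icc (0:ℝ) 1, f x ≤ 1 - x := fun x hx => by
    rw [hf _ hx]; exact tradeoff_le_one_sub hx
  refine ⟨hconv, ?_, hanti, hle⟩
  -- continuity
  have hnn : ∀ x ∈ Icc (0:ℝ) 1, 0 ≤ f x := fun x hx => by
    rw [hf _ hx]; exact tradeoff_nonneg hx.1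
  intro x hx
  rcases eq_or_lt_of_le hx.1 with hx0 | hx0
  · -- x = 0
    subst hx0
    have hf0 : f 0 = tradeoff P Q 0 := hf 0 (by simp)
    rw [ContinuousWithinAt, tendsto_order]
    constructor
    · intro b hb
      rw [hf0] at hb
      obtain ⟨δ, hδ, hδ'⟩ := tradeoff_cont_at_zero (P := P) (Q := Q)
        (tradeoff P Q 0 - b) (by linarith)
      have hmem : Icc (0:ℝ) 1 ∩ Iio δ ∈ 𝓝[Icc (0:ℝ) 1] (0:ℝ) :=
        Filter.inter_mem self_mem_nhdsWithin
          (mem_nhdsWithin_of_mem_nhds (Iio_mem_nhds hδ))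
      filter_upwards [hmem] with y hy
      rcases eq_or_lt_of_le hy.1.1 with h0 | h0
      · rw [hf _ hy.1, ← h0]; exact hb
      · rw [hf _ hy.1]
        have := hδ' y h0 hy.2
        linarith
    · intro b hb
      filter_upwards [self_mem_nhdsWithin] with y hy
      have : f y ≤ f 0 := hanti (by simp) hy hy.1
      linarith
  rcases eq_or_lt_of_le hx.2 with hx1 | hx1
  · -- x = 1
    subst hx1
    have hf1 : f 1 = 0 := by rw [hf 1 (by simp)]; exact tradeoff_one
    rw [ContinuousWithinAt, hf1]
    have hub : Tendsto (fun y : ℝ => 1 - y) (𝓝[Icc (0:ℝ) 1] 1) (𝓝 0) := by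
      have : Tendsto (fun y : ℝ => 1 - y) (𝓝 1) (𝓝 0) := by
        have h := ((continuous_const (y := (1:ℝ))).sub continuous_id).tendsto (1:ℝ)
        rw [show (0:ℝ) = 1 - 1 by norm_num]; exact h
      exact this.mono_left nhdsWithin_le_nhds
    refine tendsto_of_tendsto_of_tendsto_of_le_of_le' tendsto_const_nhds hub ?_ ?_
    · filter_upwards [self_mem_nhdsWithin] with y hy; exact hnn y hy
    · filter_upwards [self_mem_nhdsWithin] with y hy; exact hle y hy
  · -- interior
    have hxI : x ∈ Ioo (0:ℝ) 1 := ⟨hx0, hx1⟩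
    have hIoo : ConvexOn ℝ (Ioo (0:ℝ) 1) f := hconv.subset Ioo_subset_Icc_self (convex_Ioo 0 1)
    have hco : ContinuousOn f (Ioo (0:ℝ) 1) := ConvexOn.continuousOn isOpen_Ioo hIoo
    exact (hco x hxI).mono_of_mem_nhdsWithin
      (mem_nhdsWithin_of_mem_nhds (isOpen_Ioo.mem_nhds hxI))


noncomputable def rd (f : ℝ → ℝ) (x : ℝ) : ℝ := sInf (slope f x '' Ioo x 1)

variable {f : ℝ → ℝ}

section deriv
variable (hconv : ConvexOn ℝ (Icc (0:ℝ) 1) f) (hanti : AntitoneOn f (Icc (0:ℝ) 1))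

lemma slope_nonempty {x : ℝ} (hx : x ∈ Ioo (0:ℝ) 1) : (slope f x '' Ioo x 1).Nonempty :=
  ⟨slope f x ((x+1)/2), mem_image_of_mem _ ⟨by linarith [hx.1, hx.2], by linarith [hx.2]⟩⟩

include hconv in
lemma slope_bddBelow {x : ℝ} (hx : x ∈ Ioo (0:ℝ) 1) : BddBelow (slope f x '' Ioo x 1) := by
  refine ⟨slope f 0 x, ?_⟩
  rintro _ ⟨y, hy, rfl⟩
  have h := hconv.slope_mono_adjacent (x := (0:ℝ)) (y := x) (z := y)
    (by simp) (⟨by linarith [hx.1, hy.1], hy.2.le⟩) hx.1 hy.1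
  rw [slope_def_field, slope_def_field]
  exact h

include hconv in
lemma rd_le_slope {x y : ℝ} (hx : x ∈ Ioo (0:ℝ) 1) (hy : y ∈ Ioo x 1) :
    rd f x ≤ slope f x y :=
  csInf_le (slope_bddBelow hconv hx) (mem_image_of_mem _ hy)

lemma le_rd {x c : ℝ} (hx : x ∈ Ioo (0:ℝ) 1) (h : ∀ y ∈ Ioo x 1, c ≤ slope f x y) :
    c ≤ rd f x := by
  refine le_csInf (slope_nonempty hx) ?_
  rintro _ ⟨y, hy, rfl⟩
  exact h y hy

include hconv in
lemma slope_monotoneOn {x : ℝ} (hx : x ∈ Ioo (0:ℝ) 1) :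
    MonotoneOn (slope f x) (Ioo x 1) := by
  intro y hy z hz hyz
  have h := hconv.secant_mono (a := x) (x := y) (y := z)
    ⟨hx.1.le, hx.2.le⟩ ⟨(hx.1.trans hy.1).le, hy.2.le⟩ ⟨(hx.1.trans hz.1).le, hz.2.le⟩
    (ne_of_gt hy.1) (ne_of_gt hz.1) hyz
  rw [slope_def_field, slope_def_field]
  exact h

include hconv in
lemma rd_hasDeriv {x : ℝ} (hx : x ∈ Ioo (0:ℝ) 1) :
    HasDerivWithinAt f (rd f x) (Ioi x) x := by
  rw [hasDerivWithinAt_iff_tendsto_slope]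
  have hs : Ioi x \ {x} = Ioi x := diff_singleton_eq_self (fun h => lt_irrefl x h)
  rw [hs]
  have := MonotoneOn.tendsto_nhdsWithin_Ioo_right (x := x) (y := (1:ℝ))
    (nonempty_Ioo.2 hx.2) (slope_monotoneOn hconv hx) (slope_bddBelow hconv hx)
  exact this

include hconv hanti in
lemma rd_nonpos {x : ℝ} (hx : x ∈ Ioo (0:ℝ) 1) : rd f x ≤ 0 := by
  have hy : (x+1)/2 ∈ Ioo x 1 := ⟨by linarith [hx.1, hx.2], by linarith [hx.2]⟩
  refine (rd_le_slope hconv hx hy).trans ?_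
  rw [slope_def_field]
  apply div_nonpos_of_nonpos_of_nonneg
  · have := hanti ⟨hx.1.le, hx.2.le⟩ ⟨by linarith [hx.1], hy.2.le⟩ hy.1.le
    linarith
  · linarith [hy.1]

include hconv in
lemma rd_monotoneOn : MonotoneOn (rd f) (Ioo (0:ℝ) 1) := by
  intro x hx x' hx' hxx'
  rcases eq_or_lt_of_le hxx' with rfl | hlt
  · exact le_rfl
  refine le_rd hx' fun z hz => ?_
  have h1 : rd f x ≤ slope f x x' := rd_le_slope hconv hx ⟨hlt, hx'.2⟩
  have h2 := hconv.slope_mono_adjacent (x := x) (y := x') (z := z)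
    ⟨hx.1.le, hx.2.le⟩ ⟨(hx.1.trans (hlt.trans hz.1)).le, hz.2.le⟩ hlt hz.1
  rw [slope_def_field] at h1
  rw [slope_def_field]
  linarith [h1, h2]

include hconv in
lemma ftc (hcont : ContinuousOn f (Icc (0:ℝ) 1)) {s t : ℝ} (hs : s ∈ Ioo (0:ℝ) 1)
    (ht : t ∈ Ioo (0:ℝ) 1) (hst : s ≤ t) :
    (∫ y in s..t, rd f y) = f t - f s := by
  have hIccsub : Icc s t ⊆ Ioo (0:ℝ) 1 := fun y hy => ⟨hs.1.trans_le hy.1, hy.2.trans_lt ht.2⟩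
  refine intervalIntegral.integral_eq_sub_of_hasDeriv_right_of_le hst
    (hcont.mono (Icc_subset_Icc hs.1.le ht.2.le)) ?_ ?_
  · intro y hy
    exact rd_hasDeriv hconv (hIccsub ⟨hy.1.le, hy.2.le⟩)
  · have : MonotoneOn (rd f) (uIcc s t) := by
      rw [uIcc_of_le hst]
      exact (rd_monotoneOn hconv).mono hIccsub
    exact this.intervalIntegrable

end deriv
noncomputable def densR (f : ℝ → ℝ) : ℝ → ℝ := (Ioo (0:ℝ) 1).indicator (fun y => -rd f y)

section dens
variable (hconv : ConvexOn ℝ (Icc (0:ℝ) 1) f) (hcont : ContinuousOn f (Icc (0:ℝ) 1))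
  (hanti : AntitoneOn f (Icc (0:ℝ) 1))

include hconv hanti in
lemma densR_nonneg : ∀ y, 0 ≤ densR f y := by
  intro y
  rw [densR, indicator_apply]
  split_ifs with h
  · linarith [rd_nonpos hconv hanti h]
  · exact le_rfl

include hconv hanti in
lemma densR_measurable : Measurable (densR f) := by
  apply measurable_of_Ioi
  intro c
  rcases lt_or_ge c 0 with hc | hc
  · have : densR f ⁻¹' Ioi c = univ := by
      ext y; simp only [mem_preimage, mem_Ioi, mem_univ, iff_true]
      exact hc.trans_le (densR_nonneg hconv hanti y)
    rw [this]; exact MeasurableSet.univ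
  · have hord : (densR f ⁻¹' Ioi c).OrdConnected := by
      constructor
      intro a ha b hb z hz
      simp only [mem_preimage, mem_Ioi] at ha hb ⊢
      have haI : a ∈ Ioo (0:ℝ) 1 := by
        by_contra h
        rw [densR, indicator_of_notMem h] at ha; linarith
      have hbI : b ∈ Ioo (0:ℝ) 1 := by
        by_contra h
        rw [densR, indicator_of_notMem h] at hb; linarith
      have hzI : z ∈ Ioo (0:ℝ) 1 := ⟨haI.1.trans_le hz.1, hz.2.trans_lt hbI.2⟩
      rw [densR, indicator_of_mem hzI]
      rw [densR, indicator_of_mem hbI] at hb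
      have := rd_monotoneOn hconv hzI hbI hz.2
      linarith
    exact hord.measurableSet

include hconv hcont hanti in
lemma lint_Ioc (s t : ℝ) (hs : s ∈ Ioo (0:ℝ) 1) (ht : t ∈ Ioo (0:ℝ) 1) (hst : s ≤ t) :
    (∫⁻ y in Ioc s t, ENNReal.ofReal (densR f y)) = ENNReal.ofReal (f s - f t) := by
  have hsub : Ioc s t ⊆ Ioo (0:ℝ) 1 := fun y hy => ⟨hs.1.trans hy.1, hy.2.trans_lt ht.2⟩
  have hcg : (∫⁻ y in Ioc s t, ENNReal.ofReal (densR f y))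
      = ∫⁻ y in Ioc s t, ENNReal.ofReal (-rd f y) := by
    refine setLIntegral_congr_fun measurableSet_Ioc (fun y hy => ?_)
    rw [densR, indicator_of_mem (hsub hy)]
  rw [hcg]
  have hii : IntervalIntegrable (rd f) volume s t := by
    have hIccsub : Icc s t ⊆ Ioo (0:ℝ) 1 := fun y hy => ⟨hs.1.trans_le hy.1, hy.2.trans_lt ht.2⟩
    have : MonotoneOn (rd f) (uIcc s t) := by
      rw [uIcc_of_le hst]
      exact (rd_monotoneOn hconv).mono hIccsub
    exact this.intervalIntegrable
  have hint : IntegrableOn (fun y => -rd f y) (Ioc s t) := hii.neg.1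
  rw [← ofReal_integral_eq_lintegral_ofReal hint
    ((ae_restrict_iff' measurableSet_Ioc).2 (ae_of_all _ fun y hy =>
      neg_nonneg.2 (rd_nonpos hconv hanti (hsub hy))))]
  congr 1
  rw [integral_neg]
  rw [← intervalIntegral.integral_of_le hst, ftc hconv hcont hs ht hst]
  ring

include hconv hcont hanti in
lemma lint_Ioc_zero (t : ℝ) (ht : t ∈ Ioo (0:ℝ) 1) :
    (∫⁻ y in Ioc 0 t, ENNReal.ofReal (densR f y)) = ENNReal.ofReal (f 0 - f t) := by
  set A : ℕ → Set ℝ := fun n => Ioc (t / (n + 2)) t with hA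
  have hpos : ∀ n : ℕ, 0 < t / ((n : ℝ) + 2) := fun n => div_pos ht.1 (by positivity)
  have hlt : ∀ n : ℕ, t / ((n : ℝ) + 2) < t := fun n => by
    rw [div_lt_iff₀ (show (0:ℝ) < (n:ℝ) + 2 by positivity)]
    nlinarith [ht.1, (Nat.cast_nonneg n : (0:ℝ) ≤ (n:ℕ))]
  have hmono : Monotone A := by
    intro n m hnm
    apply Ioc_subset_Ioc_left
    refine div_le_div_of_nonneg_left ht.1.le (by positivity) ?_
    have := (Nat.cast_le (α := ℝ)).mpr hnm
    linarith
  have hunion : (⋃ n, A n) = Ioc 0 t := by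
    ext x
    simp only [hA, mem_iUnion, mem_Ioc]
    constructor
    · rintro ⟨n, h1, h2⟩
      exact ⟨(hpos n).trans h1, h2⟩
    · rintro ⟨hx0, hxt⟩
      obtain ⟨n, hn⟩ := exists_nat_gt (t / x)
      refine ⟨n, ?_, hxt⟩
      rw [div_lt_iff₀ (by positivity)]
      calc t = (t / x) * x := by field_simp
        _ < ((n : ℝ)) * x := by
            apply mul_lt_mul_of_pos_right hn hx0
        _ ≤ x * ((n : ℝ) + 2) := by nlinarith [hx0.le]
  set ν : Measure ℝ := volume.withDensity (fun y => ENNReal.ofReal (densR f y)) with hν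
  have hνapp : ∀ (A' : Set ℝ), MeasurableSet A' →
      ν A' = ∫⁻ y in A', ENNReal.ofReal (densR f y) := fun A' hA' => withDensity_apply _ hA'
  have htends : Filter.Tendsto (fun n => ν (A n)) Filter.atTop (𝓝 (ν (Ioc 0 t))) := by
    rw [← hunion]
    exact tendsto_measure_iUnion_atTop hmono
  have hvals : ∀ n, ν (A n) = ENNReal.ofReal (f (t / (n + 2)) - f t) := by
    intro n
    rw [hνapp _ measurableSet_Ioc]
    exact lint_Ioc hconv hcont hanti _ t ⟨hpos n, (hlt n).trans ht.2⟩ ht (hlt n).le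
  have hlim : Filter.Tendsto (fun n => ν (A n)) Filter.atTop
      (𝓝 (ENNReal.ofReal (f 0 - f t))) := by
    simp only [hvals]
    apply (ENNReal.continuous_ofReal.tendsto _).comp
    apply Filter.Tendsto.sub_const
    have hs0 : Filter.Tendsto (fun n : ℕ => t / ((n : ℝ) + 2)) Filter.atTop (𝓝 0) := by
      apply Filter.Tendsto.div_atTop (tendsto_const_nhds)
      exact Filter.tendsto_atTop_add_const_right _ _ tendsto_natCast_atTop_atTop
    have hcw : ContinuousWithinAt f (Icc (0:ℝ) 1) 0 := hcont 0 ⟨le_rfl, zero_le_one⟩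
    apply hcw.tendsto.comp
    rw [tendsto_nhdsWithin_iff]
    refine ⟨hs0, Filter.Eventually.of_forall fun n => ⟨(hpos n).le, ((hlt n).trans ht.2).le⟩⟩
  have := tendsto_nhds_unique htends hlim
  rw [← hνapp _ measurableSet_Ioc]
  exact this

include hconv hcont hanti in
lemma lint_Ioo_full (hf1 : f 1 = 0) :
    (∫⁻ y in Ioo (0:ℝ) 1, ENNReal.ofReal (densR f y)) = ENNReal.ofReal (f 0) := by
  set A : ℕ → Set ℝ := fun n => Ioc (1 / (n + 3)) (1 - 1 / (n + 3)) with hA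
  have hpos : ∀ n : ℕ, 0 < 1 / ((n : ℝ) + 3) := fun n => by positivity
  have hlt : ∀ n : ℕ, 1 / ((n : ℝ) + 3) ≤ 1/3 := fun n => by
    rw [div_le_div_iff₀ (by positivity) (by norm_num)]
    nlinarith [Nat.cast_nonneg (α := ℝ) n]
  have hmono : Monotone A := by
    intro n m hnm
    have hcast := (Nat.cast_le (α := ℝ)).mpr hnm
    have hd : (1:ℝ) / ((m : ℝ) + 3) ≤ 1 / ((n : ℝ) + 3) :=
      div_le_div_of_nonneg_left zero_le_one (by positivity) (by linarith)
    exact Ioc_subset_Ioc hd (by linarith)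
  have hunion : (⋃ n, A n) = Ioo (0:ℝ) 1 := by
    ext x
    simp only [hA, mem_iUnion, mem_Ioc, mem_Ioo]
    constructor
    · rintro ⟨n, h1, h2⟩
      refine ⟨(hpos n).trans h1, ?_⟩
      have := hpos n; linarith
    · rintro ⟨hx0, hx1⟩
      obtain ⟨n, hn⟩ := exists_nat_gt (max (1/x) (1/(1-x)))
      have hn1 : 1/x < (n : ℝ) := (le_max_left _ _).trans_lt hn
      have hn2 : 1/(1-x) < (n : ℝ) := (le_max_right _ _).trans_lt hn
      refine ⟨n, ?_, ?_⟩
      · rw [div_lt_iff₀ (by positivity)]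
        calc 1 = (1/x) * x := by field_simp
          _ < ((n:ℝ)) * x := mul_lt_mul_of_pos_right hn1 hx0
          _ ≤ x * ((n:ℝ) + 3) := by nlinarith [hx0.le]
      · have h1x : (0:ℝ) < 1 - x := by linarith
        have : 1 / ((n:ℝ) + 3) < 1 - x := by
          rw [div_lt_iff₀ (by positivity)]
          calc 1 = (1/(1-x)) * (1-x) := by field_simp
            _ < ((n:ℝ)) * (1-x) := mul_lt_mul_of_pos_right hn2 h1x
            _ ≤ (1-x) * ((n:ℝ) + 3) := by nlinarith [h1x.le]
        linarith
  set ν : Measure ℝ := volume.withDensity (fun y => ENNReal.ofReal (densR f y)) with hν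
  have hνapp : ∀ (A' : Set ℝ), MeasurableSet A' →
      ν A' = ∫⁻ y in A', ENNReal.ofReal (densR f y) := fun A' hA' => withDensity_apply _ hA'
  have htends : Filter.Tendsto (fun n => ν (A n)) Filter.atTop (𝓝 (ν (Ioo 0 1))) := by
    rw [← hunion]
    exact tendsto_measure_iUnion_atTop hmono
  have hmemA : ∀ n : ℕ, (1 / ((n:ℝ) + 3)) ∈ Ioo (0:ℝ) 1 ∧ (1 - 1 / ((n:ℝ)+3)) ∈ Ioo (0:ℝ) 1 := by
    intro n
    have h1 := hpos n; have h2 := hlt n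
    constructor
    · exact ⟨h1, by linarith⟩
    · exact ⟨by linarith, by linarith⟩
  have hvals : ∀ n, ν (A n) = ENNReal.ofReal (f (1 / (n + 3)) - f (1 - 1 / (n + 3))) := by
    intro n
    rw [hνapp _ measurableSet_Ioc]
    exact lint_Ioc hconv hcont hanti _ _ (hmemA n).1 (hmemA n).2
      (by have := hlt n; linarith)
  have hlim : Filter.Tendsto (fun n => ν (A n)) Filter.atTop
      (𝓝 (ENNReal.ofReal (f 0))) := by
    simp only [hvals]
    apply (ENNReal.continuous_ofReal.tendsto _).comp
    have hs0 : Filter.Tendsto (fun n : ℕ => 1 / ((n : ℝ) + 3)) Filter.atTop (𝓝 0) := by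
      apply Filter.Tendsto.div_atTop (tendsto_const_nhds)
      exact Filter.tendsto_atTop_add_const_right _ _ tendsto_natCast_atTop_atTop
    have hf0 : Filter.Tendsto (fun n : ℕ => f (1 / ((n:ℝ) + 3))) Filter.atTop (𝓝 (f 0)) := by
      have hcw : ContinuousWithinAt f (Icc (0:ℝ) 1) 0 := hcont 0 ⟨le_rfl, zero_le_one⟩
      apply hcw.tendsto.comp
      rw [tendsto_nhdsWithin_iff]
      exact ⟨hs0, Filter.Eventually.of_forall fun n => ⟨(hpos n).le, ((hmemA n).1).2.le⟩⟩
    have hf1' : Filter.Tendsto (fun n : ℕ => f (1 - 1 / ((n:ℝ) + 3))) Filter.atTop (𝓝 (f 1)) := by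
      have hcw : ContinuousWithinAt f (Icc (0:ℝ) 1) 1 := hcont 1 ⟨zero_le_one, le_rfl⟩
      apply hcw.tendsto.comp
      rw [tendsto_nhdsWithin_iff]
      constructor
      · have : Filter.Tendsto (fun n : ℕ => 1 - 1 / ((n : ℝ) + 3)) Filter.atTop (𝓝 (1 - 0)) :=
          tendsto_const_nhds.sub hs0
        simpa using this
      · exact Filter.Eventually.of_forall fun n => ⟨((hmemA n).2).1.le, by linarith [hpos n]⟩
    have := hf0.sub hf1'
    rw [hf1] at this
    simpa using this
  have := tendsto_nhds_unique htends hlim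
  rw [← hνapp _ measurableSet_Ioo]
  exact this

end dens
section main
variable (hconv : ConvexOn ℝ (Icc (0:ℝ) 1) f) (hcont : ContinuousOn f (Icc (0:ℝ) 1))
  (hanti : AntitoneOn f (Icc (0:ℝ) 1)) (hle : ∀ x ∈ Icc (0:ℝ) 1, f x ≤ 1 - x)
  (hrange : ∀ x ∈ Icc (0:ℝ) 1, f x ∈ Icc (0:ℝ) 1)

/-- `P` : uniform distribution on `(0,1]`. -/
noncomputable def Pm : Measure ℝ := volume.restrict (Ioc (0:ℝ) 1)

/-- `Q` : atom at `0` of mass `1 - f 0` plus density `densR f`. -/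
noncomputable def Qm (f : ℝ → ℝ) : Measure ℝ :=
  ENNReal.ofReal (1 - f 0) • Measure.dirac (0:ℝ) +
    volume.withDensity (fun y => ((densR f y).toNNReal : ℝ≥0∞))

include hle hrange in
lemma hf1 : f 1 = 0 := by
  have h1 := hle 1 ⟨zero_le_one, le_rfl⟩
  have h2 := (hrange 1 ⟨zero_le_one, le_rfl⟩).1
  linarith

include hconv hanti in
lemma coe_densNN : ∀ y, ((densR f y).toNNReal : ℝ≥0∞) = ENNReal.ofReal (densR f y) :=
  fun _ => rfl

include hconv hanti in
lemma coe_densNN_real : ∀ y, ((densR f y).toNNReal : ℝ) = densR f y :=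
  fun y => Real.coe_toNNReal _ (densR_nonneg hconv hanti y)

include hconv hcont hanti hle hrange in
lemma lint_univ :
    (∫⁻ y, ((densR f y).toNNReal : ℝ≥0∞) ∂volume) = ENNReal.ofReal (f 0) := by
  have heq : ∀ y, ((densR f y).toNNReal : ℝ≥0∞)
      = (Ioo (0:ℝ) 1).indicator (fun z => ENNReal.ofReal (densR f z)) y := by
    intro y
    rw [coe_densNN hconv hanti]
    by_cases h : y ∈ Ioo (0:ℝ) 1
    · rw [indicator_of_mem h]
    · rw [indicator_of_notMem h, densR, indicator_of_notMem h]
      simp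
  rw [lintegral_congr heq, lintegral_indicator measurableSet_Ioo _]
  exact lint_Ioo_full hconv hcont hanti (hf1 hle hrange)

instance : IsProbabilityMeasure (Pm) := by
  constructor
  rw [Pm, Measure.restrict_apply_univ, Real.volume_Ioc]
  norm_num

include hconv hcont hanti hle hrange in
lemma Qm_prob : IsProbabilityMeasure (Qm f) := by
  constructor
  rw [Qm, Measure.add_apply, Measure.smul_apply, Measure.dirac_apply' _ MeasurableSet.univ,
    withDensity_apply _ MeasurableSet.univ, Measure.restrict_univ]
  have h0 := (hrange 0 ⟨le_rfl, zero_le_one⟩)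
  rw [lint_univ hconv hcont hanti hle hrange]
  simp only [mem_univ, indicator_of_mem, Pi.one_apply, smul_eq_mul, mul_one]
  rw [← ENNReal.ofReal_add (by linarith [h0.2]) h0.1]
  norm_num

include hconv hcont hanti hle hrange in
lemma densR_integrable : Integrable (densR f) volume := by
  refine ⟨(densR_measurable hconv hanti).aestronglyMeasurable, ?_⟩
  rw [hasFiniteIntegral_def]
  have h : (∫⁻ y, ‖densR f y‖ₑ ∂volume) = ENNReal.ofReal (f 0) := by
    rw [← lint_univ hconv hcont hanti hle hrange]
    refine lintegral_congr fun y => ?_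
    rw [Real.enorm_eq_ofReal (densR_nonneg hconv hanti y), coe_densNN hconv hanti]
  rw [h]
  exact ENNReal.ofReal_lt_top

include hconv hcont hanti hle hrange in
lemma int_Qm (φ : ℝ → ℝ) (hm : Measurable φ) (hr : ∀ ω, φ ω ∈ Icc (0:ℝ) 1) :
    (∫ ω, φ ω ∂(Qm f)) = (1 - f 0) * φ 0 + ∫ y, φ y * densR f y ∂volume := by
  have h0 := hrange 0 ⟨le_rfl, zero_le_one⟩
  haveI hfin1 : IsFiniteMeasure (ENNReal.ofReal (1 - f 0) • Measure.dirac (0:ℝ)) := by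
    constructor
    rw [Measure.smul_apply, smul_eq_mul]
    exact ENNReal.mul_lt_top ENNReal.ofReal_lt_top (by simp)
  haveI hfin2 : IsFiniteMeasure (volume.withDensity (fun y => ((densR f y).toNNReal : ℝ≥0∞))) := by
    constructor
    rw [withDensity_apply _ MeasurableSet.univ, Measure.restrict_univ,
      lint_univ hconv hcont hanti hle hrange]
    exact ENNReal.ofReal_lt_top
  rw [Qm, integral_add_measure (test_integrable _ hm hr) (test_integrable _ hm hr),
    integral_smul_measure, integral_dirac,
    integral_withDensity_eq_integral_smul ((densR_measurable hconv hanti).real_toNNReal) φ]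
  congr 1
  · rw [ENNReal.toReal_ofReal (by linarith [h0.2] : (0:ℝ) ≤ 1 - f 0)]
    exact smul_eq_mul _ _
  · refine integral_congr_ae (ae_of_all _ fun y => ?_)
    show (densR f y).toNNReal • φ y = φ y * densR f y
    rw [NNReal.smul_def]
    rw [smul_eq_mul]
    rw [Real.coe_toNNReal _ (densR_nonneg hconv hanti y)]
    ring

include hconv hcont hanti hle hrange in
lemma setint_densR {α : ℝ} (hα : α ∈ Icc (0:ℝ) 1) :
    (∫ y in Ioc 0 α, densR f y ∂volume) = f 0 - f α := by
  have hconv0 : (∫ y in Ioc 0 α, densR f y ∂volume)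
      = (∫⁻ y in Ioc 0 α, ENNReal.ofReal (densR f y)).toReal := by
    rw [integral_eq_lintegral_of_nonneg_ae
      (ae_of_all _ fun y => densR_nonneg hconv hanti y)
      (densR_measurable hconv hanti).aestronglyMeasurable]
  rcases eq_or_lt_of_le hα.1 with h0 | h0
  · rw [← h0]
    simp
  rcases eq_or_lt_of_le hα.2 with h1 | h1
  · subst h1
    rw [hconv0]
    have hres : volume.restrict (Ioc (0:ℝ) 1) = volume.restrict (Ioo (0:ℝ) 1) :=
      (Measure.restrict_congr_set Ioo_ae_eq_Ioc).symm
    rw [hres, lint_Ioo_full hconv hcont hanti (hf1 hle hrange),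
      ENNReal.toReal_ofReal (hrange 0 ⟨le_rfl, zero_le_one⟩).1, hf1 hle hrange]
    ring
  · rw [hconv0, lint_Ioc_zero hconv hcont hanti α ⟨h0, h1⟩]
    rw [ENNReal.toReal_ofReal]
    have := hanti ⟨le_rfl, zero_le_one⟩ ⟨h0.le, h1.le⟩ h0.le
    linarith

include hconv hcont hanti hle hrange in
lemma main_bound {α : ℝ} (hα : α ∈ Icc (0:ℝ) 1) (φ : ℝ → ℝ) (hm : Measurable φ)
    (hr : ∀ ω, φ ω ∈ Icc (0:ℝ) 1) (hφP : (∫ ω, φ ω ∂Pm) ≤ α) :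
    (∫ ω, φ ω ∂(Qm f)) ≤ 1 - f α := by
  have h00 := hrange 0 ⟨le_rfl, zero_le_one⟩
  have hQeq := int_Qm hconv hcont hanti hle hrange φ hm hr
  haveI : IsProbabilityMeasure (Qm f) := Qm_prob hconv hcont hanti hle hrange
  rcases eq_or_lt_of_le hα.2 with h1 | h1
  · subst h1
    rw [hf1 hle hrange]
    linarith [test_int_le_one (Qm f) hm hr]
  rcases eq_or_lt_of_le hα.1 with h0 | h0
  · -- α = 0
    have hP0 : (∫ ω, φ ω ∂Pm) = 0 := by
      refine le_antisymm (by rw [← h0] at hφP; exact hφP) ?_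
      exact integral_nonneg fun y => (hr y).1
    have hae : φ =ᵐ[Pm] 0 :=
      (integral_eq_zero_iff_of_nonneg (fun y => (hr y).1) (test_integrable Pm hm hr)).1 hP0
    have hae' : ∀ᵐ y ∂volume, y ∈ Ioc (0:ℝ) 1 → φ y = 0 := by
      rw [Pm] at hae
      exact (ae_restrict_iff' measurableSet_Ioc).1 hae
    have hzero : (∫ y, φ y * densR f y ∂volume) = 0 := by
      have hz : ∀ᵐ y ∂volume, φ y * densR f y = 0 := by
        filter_upwards [hae'] with y hy
        by_cases hmem : y ∈ Ioo (0:ℝ) 1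
        · rw [hy ⟨hmem.1, hmem.2.le⟩]; ring
        · rw [densR, indicator_of_notMem hmem]; ring
      rw [integral_congr_ae hz, integral_zero]
    rw [hQeq, hzero, ← h0]
    nlinarith [h00.1, h00.2, (hr 0).1, (hr 0).2]
  -- α ∈ Ioo 0 1
  have hαI : α ∈ Ioo (0:ℝ) 1 := ⟨h0, h1⟩
  have hgα0 : 0 ≤ densR f α := densR_nonneg hconv hanti α
  have hαd : densR f α = -rd f α := by rw [densR, indicator_of_mem hαI]
  set i : ℝ → ℝ := fun y => indicator (Ioc (0:ℝ) α) (fun _ => (1:ℝ)) y with hi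
  set j : ℝ → ℝ := fun y => indicator (Ioc (0:ℝ) 1) (fun _ => (1:ℝ)) y with hj
  have hkey : ∀ y, φ y * densR f y ≤ indicator (Ioc 0 α) (densR f) y
      + densR f α * (φ y * j y) - densR f α * i y := by
    intro y
    by_cases hy1 : y ∈ Ioc (0:ℝ) α
    · have hyI : y ∈ Ioo (0:ℝ) 1 := ⟨hy1.1, hy1.2.trans_lt hαI.2⟩
      have hyJ : y ∈ Ioc (0:ℝ) 1 := ⟨hy1.1, hyI.2.le⟩
      rw [hi, hj]
      simp only [indicator_of_mem hy1, indicator_of_mem hyJ]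
      have hd : densR f α ≤ densR f y := by
        rw [densR, indicator_of_mem hyI, indicator_of_mem hαI]
        have := rd_monotoneOn hconv hyI hαI hy1.2
        linarith
      nlinarith [(hr y).1, (hr y).2, hd, hgα0]
    · by_cases hy2 : y ∈ Ioc (0:ℝ) 1
      · rw [hi, hj]
        simp only [indicator_of_notMem hy1, indicator_of_mem hy2]
        have hyα : α < y := by
          by_contra hc; push_neg at hc; exact hy1 ⟨hy2.1, hc⟩
        have hd : densR f y ≤ densR f α := by
          by_cases h3 : y ∈ Ioo (0:ℝ) 1
          · rw [densR, indicator_of_mem h3, indicator_of_mem hαI]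
            have := rd_monotoneOn hconv hαI h3 hyα.le
            linarith
          · rw [densR]
            rw [indicator_of_notMem h3]
            exact hgα0
        nlinarith [(hr y).1, hd]
      · have h3 : y ∉ Ioo (0:ℝ) 1 := fun h => hy2 ⟨h.1, h.2.le⟩
        rw [hi, hj]
        simp only [indicator_of_notMem hy1, indicator_of_notMem hy2]
        rw [densR, indicator_of_notMem h3]
        simp
  have hgInt := densR_integrable hconv hcont hanti hle hrange
  have hbd : ∃ C, ∀ y, ‖φ y‖ ≤ C :=
    ⟨1, fun y => by rw [Real.norm_eq_abs, abs_le]; exact ⟨by linarith [(hr y).1], (hr y).2⟩⟩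
  have hIφd : Integrable (fun y => φ y * densR f y) volume :=
    hgInt.bdd_mul hm.aestronglyMeasurable (ae_of_all _ hbd.choose_spec)
  have hIid : Integrable (fun y => indicator (Ioc (0:ℝ) α) (densR f) y) volume :=
    hgInt.indicator measurableSet_Ioc
  have hIj : Integrable j volume := by
    rw [hj]
    refine (integrable_indicator_iff measurableSet_Ioc).2 ?_
    refine integrableOn_const ?_
    rw [Real.volume_Ioc]
    exact ENNReal.ofReal_ne_top
  have hIi : Integrable i volume := by
    rw [hi]
    refine (integrable_indicator_iff measurableSet_Ioc).2 ?_
    refine integrableOn_const ?_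
    rw [Real.volume_Ioc]
    exact ENNReal.ofReal_ne_top
  have hIφj : Integrable (fun y => φ y * j y) volume :=
    hIj.bdd_mul hm.aestronglyMeasurable (ae_of_all _ hbd.choose_spec)
  have hIcφj : Integrable (fun y => densR f α * (φ y * j y)) volume := hIφj.const_mul _
  have hIci : Integrable (fun y => densR f α * i y) volume := hIi.const_mul _
  have hIsum : Integrable (fun y => indicator (Ioc (0:ℝ) α) (densR f) y
      + densR f α * (φ y * j y)) volume := hIid.add hIcφj
  have hRHSInt : Integrable (fun y => indicator (Ioc 0 α) (densR f) y
      + densR f α * (φ y * j y) - densR f α * i y) volume := hIsum.sub hIci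
  have hmono := integral_mono hIφd hRHSInt hkey
  rw [integral_sub hIsum hIci, integral_add hIid hIcφj,
    integral_const_mul, integral_const_mul] at hmono
  have hint_id : (∫ y, indicator (Ioc (0:ℝ) α) (densR f) y ∂volume) = f 0 - f α := by
    rw [integral_indicator measurableSet_Ioc]
    exact setint_densR hconv hcont hanti hle hrange hα
  have hint_φj : (∫ y, φ y * j y ∂volume) = ∫ ω, φ ω ∂Pm := by
    have hpt : ∀ y, φ y * j y = indicator (Ioc (0:ℝ) 1) φ y := fun y => by
      rw [hj]
      by_cases h : y ∈ Ioc (0:ℝ) 1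
      · simp [indicator_of_mem h]
      · simp [indicator_of_notMem h]
    rw [integral_congr_ae (Filter.Eventually.of_forall hpt), integral_indicator measurableSet_Ioc]
    rfl
  have hint_i : (∫ y, i y ∂volume) = α := by
    rw [hi, integral_indicator_const (1:ℝ) measurableSet_Ioc, Measure.real, Real.volume_Ioc, smul_eq_mul,
      mul_one, sub_zero, ENNReal.toReal_ofReal hα.1]
  rw [hint_id, hint_φj, hint_i] at hmono
  have hprod : densR f α * (∫ ω, φ ω ∂Pm) ≤ densR f α * α :=
    mul_le_mul_of_nonneg_left hφP hgα0
  rw [hQeq]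
  nlinarith [(hr 0).1, (hr 0).2, h00.1, h00.2]

include hconv hcont hanti hle hrange in
lemma attain {α : ℝ} (hα : α ∈ Icc (0:ℝ) 1) :
    ∃ φ : ℝ → ℝ, Measurable φ ∧ (∀ ω, φ ω ∈ Icc (0:ℝ) 1) ∧
      (∫ ω, φ ω ∂Pm) ≤ α ∧ (∫ ω, φ ω ∂(Qm f)) = 1 - f α := by
  set s : Set ℝ := insert (0:ℝ) (Ioc 0 α) with hs
  have hsm : MeasurableSet s := measurableSet_Ioc.insert 0
  have hgInt := densR_integrable hconv hcont hanti hle hrange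
  have hrφ : ∀ ω, indicator s (fun _ => (1:ℝ)) ω ∈ Icc (0:ℝ) 1 := by
    intro ω
    rw [indicator_apply]
    split_ifs
    · exact ⟨zero_le_one, le_rfl⟩
    · exact ⟨le_rfl, zero_le_one⟩
  refine ⟨indicator s (fun _ => (1:ℝ)), measurable_const.indicator hsm, hrφ, ?_, ?_⟩
  · rw [Pm]
    have hic : (∫ ω, indicator s (fun _ => (1:ℝ)) ω ∂(volume.restrict (Ioc 0 1)))
        = ((volume.restrict (Ioc 0 1)) s).toReal • (1:ℝ) := integral_indicator_const _ hsm
    rw [hic, Measure.restrict_apply hsm]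
    have hseq : s ∩ Ioc 0 1 = Ioc 0 α := by
      ext x
      simp only [hs, mem_inter_iff, mem_insert_iff, mem_Ioc]
      constructor
      · rintro ⟨h1 | h1, h2⟩
        · exfalso; rw [h1] at h2; exact lt_irrefl 0 h2.1
        · exact h1
      · intro h
        exact ⟨Or.inr h, ⟨h.1, h.2.trans hα.2⟩⟩
    rw [hseq, Real.volume_Ioc, smul_eq_mul, mul_one, sub_zero, ENNReal.toReal_ofReal hα.1]
  · rw [int_Qm hconv hcont hanti hle hrange _ (measurable_const.indicator hsm) hrφ]
    have hφ0 : indicator s (fun _ => (1:ℝ)) 0 = 1 := indicator_of_mem (mem_insert _ _) _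
    have hprod : ∀ y, indicator s (fun _ => (1:ℝ)) y * densR f y
        = indicator s (densR f) y := fun y => by
      by_cases h : y ∈ s
      · simp [indicator_of_mem h]
      · simp [indicator_of_notMem h]
    rw [hφ0, mul_one, integral_congr_ae (Filter.Eventually.of_forall hprod),
      integral_indicator hsm]
    have hins : (∫ y in s, densR f y ∂volume) = ∫ y in Ioc 0 α, densR f y ∂volume := by
      rw [hs, insert_eq]
      rw [setIntegral_union (by simp : Disjoint ({(0:ℝ)} : Set ℝ) (Ioc 0 α))
        measurableSet_Ioc hgInt.integrableOn hgInt.integrableOn]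
      have hz : (∫ y in ({0} : Set ℝ), densR f y ∂volume) = 0 := by
        rw [Measure.restrict_eq_zero.2 (by simp), integral_zero_measure]
      rw [hz, zero_add]
    rw [hins, setint_densR hconv hcont hanti hle hrange hα]
    ring

end main
end TradeoffAux

end TradeoffProof

/-- `f : [0,1] → [0,1]` is a tradeoff function (i.e. equals `T(P,Q)` for some
probability measures `P, Q` on a common space) iff `f` is convex, continuous, decreasing and
`f(x) ≤ 1 - x` on `[0,1]`. -/
theorem tradeoff_fn_characterization (f : ℝ → ℝ)
    (hrange : ∀ x ∈ Icc (0:ℝ) 1, f x ∈ Icc (0:ℝ) 1) :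
    (∃ (Ω : Type) (_ : MeasurableSpace Ω) (P Q : Measure Ω),
        IsProbabilityMeasure P ∧ IsProbabilityMeasure Q ∧
        ∀ α ∈ Icc (0:ℝ) 1, f α = tradeoff P Q α) ↔
      (ConvexOn ℝ (Icc (0:ℝ) 1) f ∧ ContinuousOn f (Icc (0:ℝ) 1) ∧
        AntitoneOn f (Icc (0:ℝ) 1) ∧ ∀ x ∈ Icc (0:ℝ) 1, f x ≤ 1 - x) := by
  constructor
  · rintro ⟨Ω, mΩ, P, Q, hP, hQ, heq⟩
    exact TradeoffAux.forward_dir heq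
  · rintro ⟨hconv, hcont, hanti, hle⟩
    haveI := TradeoffAux.Qm_prob hconv hcont hanti hle hrange
    refine ⟨ℝ, inferInstance, TradeoffAux.Pm, TradeoffAux.Qm f, inferInstance, inferInstance,
      fun α hα => ?_⟩
    refine le_antisymm ?_ ?_
    · refine TradeoffAux.le_tradeoff hα.1 fun φ hm hr hφP => ?_
      have := TradeoffAux.main_bound hconv hcont hanti hle hrange hα φ hm hr hφP
      linarith
    · obtain ⟨φ, hm, hr, hφP, hφQ⟩ := TradeoffAux.attain hconv hcont hanti hle hrange hα
      have := TradeoffAux.tradeoff_le_test (P := TradeoffAux.Pm) (Q := TradeoffAux.Qm f) hm hr hφP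
      rw [hφQ] at this
      linarith
end

section
/- Let f be a symmetric nontrivial tradeoff function and let F be a canonical noise distribution for f. Then F satisfies the recurrence F(x) = 1 − f(F(x−1)) whenever F(x−1) > 0, and F(x) = f(1 − F(x+1)) whenever F(x+1) < 1. -/
open MeasureTheory Set

section CndRecurrenceAux

open Filter

lemma cndAux_quant_nonempty (F : ℝ → ℝ) (htop : Tendsto F atTop (nhds 1)) {p : ℝ}
    (hp1 : p < 1) : {x : ℝ | p ≤ F x}.Nonempty := by
  obtain ⟨x, hx⟩ := (htop.eventually (eventually_ge_nhds hp1)).exists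
  exact ⟨x, hx⟩

lemma cndAux_quant_bddBelow (F : ℝ → ℝ) (hbot : Tendsto F atBot (nhds 0)) {p : ℝ}
    (hp0 : 0 < p) : BddBelow {x : ℝ | p ≤ F x} := by
  obtain ⟨b, hb⟩ := (eventually_atBot).mp (hbot.eventually (eventually_lt_nhds hp0))
  refine ⟨b, fun t ht => ?_⟩
  by_contra hlt
  exact absurd ht (not_le.2 (hb t (le_of_not_ge hlt)))

lemma cndAux_quantile_le (F : ℝ → ℝ) (hbot : Tendsto F atBot (nhds 0)) {p x : ℝ}
    (hp0 : 0 < p) (hx : p ≤ F x) : quantileFn F p ≤ x :=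
  csInf_le (cndAux_quant_bddBelow F hbot hp0) hx

lemma cndAux_F_quantile (F : ℝ → ℝ) (hcont : Continuous F)
    (htop : Tendsto F atTop (nhds 1)) (hbot : Tendsto F atBot (nhds 0))
    {p : ℝ} (hp0 : 0 < p) (hp1 : p < 1) : F (quantileFn F p) = p := by
  have hne := cndAux_quant_nonempty F htop hp1
  have hbdd := cndAux_quant_bddBelow F hbot hp0
  have hclosed : IsClosed {x : ℝ | p ≤ F x} := isClosed_le continuous_const hcont
  have hmem : quantileFn F p ∈ {x : ℝ | p ≤ F x} := hclosed.csInf_mem hne hbdd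
  refine le_antisymm ?_ hmem
  by_contra hgt
  push_neg at hgt
  have hev : ∀ᶠ x in nhds (quantileFn F p), p < F x :=
    (hcont.continuousAt).eventually_const_lt hgt
  obtain ⟨ε, hε, hball⟩ := Metric.eventually_nhds_iff.mp hev
  have hx : quantileFn F p - ε/2 ∈ {x : ℝ | p ≤ F x} := by
    refine le_of_lt (hball ?_)
    rw [Real.dist_eq, show quantileFn F p - ε/2 - quantileFn F p = -(ε/2) by ring, abs_neg,
      abs_of_nonneg (by linarith)]
    linarith
  have := csInf_le hbdd hx
  simp only [quantileFn] at this ⊢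
  linarith

lemma cnd_rec_forward (f : ℝ → ℝ) (hf : IsTradeoffFn f) (hsym : SymmTF f)
    (μ : Measure ℝ) (hcnd : IsCND f μ) :
    ∀ x : ℝ, 0 < rcdf μ (x - 1) → rcdf μ x = 1 - f (rcdf μ (x - 1)) := by
  haveI := hcnd.prob
  set F := rcdf μ with hFdef
  have hmono : Monotone F := fun a b hab =>
    ENNReal.toReal_mono (measure_ne_top μ _) (measure_mono (Iic_subset_Iic.2 hab))
  have hge0 : ∀ z, 0 ≤ F z := fun _ => ENNReal.toReal_nonneg
  have hle1 : ∀ z, F z ≤ 1 := by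
    intro z
    have h := prob_le_one (μ := μ) (s := Iic z)
    have := ENNReal.toReal_mono (by simp) h
    simpa [hFdef, rcdf] using this
  have hFneg : ∀ z, F (-z) = 1 - F z := by
    intro z
    have h := hcnd.symm z
    have h2 := hcnd.symm (-z)
    rw [neg_neg] at h2
    linarith
  have htop : Tendsto F atTop (nhds 1) := by
    have h := tendsto_measure_Iic_atTop μ
    have h2 := (ENNReal.tendsto_toReal (a := μ univ) (measure_ne_top μ _)).comp h
    simp only [measure_univ, ENNReal.toReal_one] at h2
    exact h2
  have hbot : Tendsto F atBot (nhds 0) := by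
    have h1 : Tendsto (fun z : ℝ => F (-z)) atBot (nhds 1) :=
      htop.comp tendsto_neg_atBot_atTop
    have h2 : Tendsto (fun z : ℝ => 1 - F (-z)) atBot (nhds (1 - 1)) :=
      tendsto_const_nhds.sub h1
    simp only [sub_self] at h2
    refine h2.congr ?_
    intro z
    rw [hFneg]
    ring
  have hFq : ∀ p : ℝ, 0 < p → p < 1 → F (quantileFn F p) = p := fun p h0 h1 =>
    cndAux_F_quantile F hcnd.cont htop hbot h0 h1
  have hid : ∀ α : ℝ, 0 < α → α < 1 → f α = F (quantileFn F (1 - α) - 1) := fun α h1 h2 =>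
    (hcnd.tight α ⟨h1, h2⟩).trans (hcnd.closedForm α ⟨h1, h2⟩)
  intro x hx0
  have hxy : x = (x - 1) + 1 := by ring
  set y := x - 1 with hy
  set v := F y with hv
  have hv1 : v ≤ 1 := hle1 y
  rcases eq_or_lt_of_le hv1 with hveq | hvlt
  · -- v = 1
    have hf1 : f v = 0 := by
      have h1 := hf.le_one_sub v ⟨hx0.le, hv1⟩
      have h2 := (hf.maps v ⟨hx0.le, hv1⟩).1
      rw [hveq] at h1 h2 ⊢
      linarith
    have hx1 : F x = 1 := by
      refine le_antisymm (hle1 x) ?_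
      calc (1:ℝ) = v := hveq.symm
        _ ≤ F x := hmono (by rw [hy]; linarith)
    rw [hx1, hf1]
    norm_num
  · -- 0 < v < 1
    have hv0 : 0 < v := hx0
    have hfv : f v = F (quantileFn F (1 - v) - 1) := hid v hv0 hvlt
    have h1v0 : 0 < 1 - v := by linarith
    have h1v1 : 1 - v < 1 := by linarith
    have hQle : quantileFn F (1 - v) ≤ -y := by
      refine cndAux_quantile_le F hbot h1v0 ?_
      rw [hFneg y]
    have hFyn : F (-y - 1) = 1 - F (y + 1) := by
      rw [show -y - 1 = -(y + 1) by ring, hFneg]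
    have hupper : f v ≤ 1 - F (y + 1) := by
      have h := hmono (show quantileFn F (1 - v) - 1 ≤ -y - 1 by linarith)
      rw [hfv]
      linarith [hFyn, h]
    have hlower : 1 - F (y + 1) ≤ f v := by
      by_contra hc
      push_neg at hc
      set q := quantileFn F (1 - v) with hq
      have hFq' : F q = 1 - v := hFq _ h1v0 h1v1
      have hFy'' : F (-q) = v := by rw [hFneg]; linarith
      have haF : f v = 1 - F (-q + 1) := by
        rw [hfv, show q - 1 = -(-q + 1) by ring, hFneg]
      have ha0 : 0 ≤ f v := by
        have := hle1 (-q + 1); linarith [haF]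
      have hb1 : 1 - F (y + 1) ≤ 1 := by
        have := hge0 (y + 1); linarith
      have hkey : ∀ s : ℝ, f v < s → s < 1 - F (y + 1) → f s = v := by
        intro s has hsb
        have hs0 : 0 < s := lt_of_le_of_lt ha0 has
        have hs1 : s < 1 := lt_of_lt_of_le hsb hb1
        have hw0 : 0 < 1 - s := by linarith
        have hw1 : 1 - s < 1 := by linarith
        have hFQw : F (quantileFn F (1 - s)) = 1 - s := hFq _ hw0 hw1
        have hQwle : quantileFn F (1 - s) ≤ -q + 1 := by
          refine cndAux_quantile_le F hbot hw0 ?_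
          have : f v = 1 - F (-q + 1) := haF
          linarith
        have hQwgt : y + 1 < quantileFn F (1 - s) := by
          by_contra h
          push_neg at h
          have h2 := hmono h
          rw [hFQw] at h2
          linarith
        have h1 : F (quantileFn F (1 - s) - 1) ≤ v := by
          rw [← hFy'']
          exact hmono (by linarith)
        have h2 : v ≤ F (quantileFn F (1 - s) - 1) := by
          rw [hv]
          exact hmono (by linarith)
        have h3 := hid s hs0 hs1
        linarith
      set s₂ := (f v + (1 - F (y + 1))) / 2 with hs2
      have hs2a : f v < s₂ := by rw [hs2]; linarith
      have hs2b : s₂ < 1 - F (y + 1) := by rw [hs2]; linarith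
      have hfs2 : f s₂ = v := hkey s₂ hs2a hs2b
      have hs2mem : s₂ ∈ Icc (0:ℝ) 1 := ⟨le_trans ha0 hs2a.le, le_trans hs2b.le hb1⟩
      have hinv := hsym s₂ hs2mem
      have hgt : ∀ t, 0 ≤ t → t ≤ 1 → t < v → s₂ < f t := by
        intro t ht0 ht1 htv
        by_contra h
        push_neg at h
        have hmem : t ∈ {u | u ∈ Icc (0:ℝ) 1 ∧ f u ≤ s₂} := ⟨⟨ht0, ht1⟩, h⟩
        have hbdd : BddBelow {u | u ∈ Icc (0:ℝ) 1 ∧ f u ≤ s₂} :=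
          ⟨0, fun u hu => hu.1.1⟩
        have hle := csInf_le hbdd hmem
        have : tfInv f s₂ ≤ t := hle
        rw [← hinv, hfs2] at this
        linarith
      have hvmem : v ∈ Icc (0:ℝ) 1 := ⟨hv0.le, hv1⟩
      have hcontv : ContinuousWithinAt f (Ico 0 v) v :=
        (hf.cont v hvmem).mono (fun t ht => ⟨ht.1, ht.2.le.trans hv1⟩)
      have hnb : (nhdsWithin v (Ico (0:ℝ) v)).NeBot := by
        refine mem_closure_iff_nhdsWithin_neBot.mp ?_
        rw [closure_Ico (ne_of_lt hv0)]
        exact ⟨hv0.le, le_refl v⟩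
      have hge : s₂ ≤ f v := by
        refine ge_of_tendsto hcontv ?_
        filter_upwards [self_mem_nhdsWithin] with t ht
        exact (hgt t ht.1 (ht.2.le.trans hv1) ht.2).le
      linarith
    show F x = 1 - f v
    rw [hxy]
    linarith

end CndRecurrenceAux

/-- a CND `F` for a symmetric nontrivial tradeoff function `f` satisfies
`F x = 1 - f (F (x-1))` when `F (x-1) > 0` and `F x = f (1 - F (x+1))` when `F (x+1) < 1`. -/
theorem cnd_recurrence (f : ℝ → ℝ) (hf : IsTradeoffFn f) (hsym : SymmTF f)
    (hnt : NontrivialTF f) (μ : Measure ℝ) (hcnd : IsCND f μ) :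
    (∀ x : ℝ, 0 < rcdf μ (x - 1) → rcdf μ x = 1 - f (rcdf μ (x - 1))) ∧
    (∀ x : ℝ, rcdf μ (x + 1) < 1 → rcdf μ x = f (1 - rcdf μ (x + 1))) := by
  have hmain := cnd_rec_forward f hf hsym μ hcnd
  refine ⟨hmain, ?_⟩
  intro x hx
  have hsx := hcnd.symm (x + 1)
  have hneg : rcdf μ (-(x + 1)) = 1 - rcdf μ (x + 1) := by linarith
  have hpos : 0 < rcdf μ (-x - 1) := by
    rw [show -x - 1 = -(x + 1) by ring, hneg]
    linarith
  have h := hmain (-x) hpos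
  have hsx2 := hcnd.symm x
  rw [show -x - 1 = -(x + 1) by ring, hneg] at h
  rw [hsx2, h]
  ring
end

section
/- Let f be a symmetric nontrivial tradeoff function with fixed point c ∈ [0,1/2), and define F_f on ℝ by F_f(x) = c(1/2 − x) + (1−c)(x + 1/2) for −1/2 ≤ x ≤ 1/2, F_f(x) = 1 − f(F_f(x−1)) for x > 1/2, and F_f(x) = f(1 − F_f(x+1)) for x < −1/2. Then F_f is the cdf of a continuous real-valued random variable symmetric about zero: F_f takes values in [0,1], is continuous, increasing, satisfies F_f(x) = 1 − F_f(−x), and tends to 0 and 1 at ∓∞. -/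
open MeasureTheory Set

namespace FfAux

noncomputable def Tf (f : ℝ → ℝ) (y : ℝ) : ℝ := 1 - f y
noncomputable def Lf (c : ℝ) (x : ℝ) : ℝ := c * (1/2 - x) + (1 - c) * (x + 1/2)

variable {f : ℝ → ℝ} {c : ℝ} {F : ℝ → ℝ}

lemma f_one (hf : IsTradeoffFn f) : f 1 = 0 :=
  le_antisymm (by simpa using hf.le_one_sub 1 (by norm_num))
    (hf.maps 1 (by norm_num)).1

lemma f_lt (hf : IsTradeoffFn f) (hc : c ∈ Ico (0:ℝ) (1/2)) (hfc : f c = c)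
    {y : ℝ} (hy : y ∈ Ioo c 1) : f y < 1 - y := by
  have hc0 := hc.1
  have hc2 := hc.2
  have h1c : (0:ℝ) < 1 - c := by linarith
  have ha : (0:ℝ) ≤ (1 - y)/(1 - c) := by
    apply div_nonneg <;> linarith [hy.2]
  have hb : (0:ℝ) ≤ (y - c)/(1 - c) := by
    apply div_nonneg <;> linarith [hy.1]
  have hab : (1 - y)/(1 - c) + (y - c)/(1 - c) = 1 := by field_simp; ring
  have key := hf.convex.2 (show c ∈ Icc (0:ℝ) 1 by constructor <;> linarith)
      (show (1:ℝ) ∈ Icc (0:ℝ) 1 by norm_num) ha hb hab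
  rw [smul_eq_mul, smul_eq_mul, smul_eq_mul, smul_eq_mul] at key
  have hxy : (1 - y)/(1 - c) * c + (y - c)/(1 - c) * 1 = y := by field_simp; ring
  rw [hxy, hfc, f_one hf, mul_zero, add_zero] at key
  have hlt : (1 - y)/(1 - c) * c < 1 - y := by
    rw [div_mul_eq_mul_div, div_lt_iff₀ h1c]
    nlinarith [hy.2]
  linarith

lemma sub_Icc (hc : c ∈ Ico (0:ℝ) (1/2)) : Icc c 1 ⊆ Icc (0:ℝ) 1 :=
  Icc_subset_Icc hc.1 le_rfl

lemma Tf_mono (hf : IsTradeoffFn f) : ∀ x ∈ Icc (0:ℝ) 1, ∀ y ∈ Icc (0:ℝ) 1,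
    x ≤ y → Tf f x ≤ Tf f y := by
  intro x hx y hy hxy
  have := hf.anti hx hy hxy
  unfold Tf; linarith

lemma Tf_mem (hf : IsTradeoffFn f) (hc : c ∈ Ico (0:ℝ) (1/2)) :
    ∀ y ∈ Icc c 1, Tf f y ∈ Icc c 1 := by
  intro y hy
  have h01 : y ∈ Icc (0:ℝ) 1 := sub_Icc hc hy
  have h1 := hf.le_one_sub y h01
  have h2 := (hf.maps y h01).1
  unfold Tf
  constructor
  · linarith [hy.1]
  · linarith

lemma iter_mem (hf : IsTradeoffFn f) (hc : c ∈ Ico (0:ℝ) (1/2)) :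
    ∀ n : ℕ, ∀ y ∈ Icc c 1, (Tf f)^[n] y ∈ Icc c 1 := by
  intro n
  induction n with
  | zero => intro y hy; simpa using hy
  | succ n ih =>
    intro y hy
    rw [Function.iterate_succ_apply']
    exact Tf_mem hf hc _ (ih y hy)

lemma iter_mono (hf : IsTradeoffFn f) (hc : c ∈ Ico (0:ℝ) (1/2)) :
    ∀ n : ℕ, ∀ x ∈ Icc c 1, ∀ y ∈ Icc c 1, x ≤ y → (Tf f)^[n] x ≤ (Tf f)^[n] y := by
  intro n
  induction n with
  | zero => intro x _ y _ h; simpa using h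
  | succ n ih =>
    intro x hx y hy hxy
    rw [Function.iterate_succ_apply', Function.iterate_succ_apply']
    exact Tf_mono hf _ (sub_Icc hc (iter_mem hf hc n x hx)) _
      (sub_Icc hc (iter_mem hf hc n y hy)) (ih x hx y hy hxy)

lemma iter_cont (hf : IsTradeoffFn f) (hc : c ∈ Ico (0:ℝ) (1/2)) :
    ∀ n : ℕ, ContinuousOn ((Tf f)^[n]) (Icc c 1) := by
  intro n
  induction n with
  | zero => simpa using continuousOn_id
  | succ n ih =>
    rw [Function.iterate_succ']
    refine ContinuousOn.comp ?_ ih (fun y hy => sub_Icc hc (iter_mem hf hc n y hy))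
    exact continuousOn_const.sub hf.cont

lemma Lf_mem (hc : c ∈ Ico (0:ℝ) (1/2)) :
    ∀ x ∈ Icc (-(1/2):ℝ) (1/2), Lf c x ∈ Icc c 1 := by
  intro x hx
  have h1 := hx.1; have h2 := hx.2
  have hc0 := hc.1; have hc2 := hc.2
  unfold Lf
  constructor <;> nlinarith

lemma Lf_mono (hc : c ∈ Ico (0:ℝ) (1/2)) : Monotone (Lf c) := by
  intro x y h
  have := hc.2
  unfold Lf; nlinarith

lemma rep (hF : IsFfCon f c F) (hfc : f c = c) :
    ∀ n : ℕ, ∀ x ∈ Icc ((n:ℝ) - 1/2) ((n:ℝ) + 1/2), F x = (Tf f)^[n] (Lf c (x - n)) := by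
  intro n
  induction n with
  | zero =>
    intro x hx
    simp only [Nat.cast_zero, sub_zero] at hx ⊢
    rw [hF.1 x (by constructor <;> [linarith [hx.1]; linarith [hx.2]])]
    simp [Lf]
  | succ n ih =>
    intro x hx
    push_cast at hx ⊢
    by_cases hx2 : 1/2 < x
    · have hx1 : x - 1 ∈ Icc ((n:ℝ) - 1/2) ((n:ℝ) + 1/2) :=
        ⟨by linarith [hx.1], by linarith [hx.2]⟩
      rw [hF.2.1 x hx2, ih (x-1) hx1]
      have he : x - 1 - (n:ℝ) = x - ((n:ℝ) + 1) := by ring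
      rw [Function.iterate_succ_apply', ← he]
      rfl
    · have hn : (n:ℝ) ≤ 0 := by linarith [hx.1]
      have hn0 : n = 0 := by exact_mod_cast le_antisymm hn (Nat.cast_nonneg n)
      subst hn0
      have hxe : x = 1/2 := le_antisymm (not_lt.mp hx2) (by push_cast at hx; linarith [hx.1])
      subst hxe
      rw [hF.1 (1/2) (by norm_num)]
      simp only [Nat.cast_zero, Function.iterate_one, Function.iterate_succ_apply',
        Function.iterate_zero_apply]
      have : Lf c (1/2 - ((0:ℝ) + 1)) = c := by unfold Lf; ring
      rw [this]
      unfold Tf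
      rw [hfc]
      ring

lemma exists_interval {x : ℝ} (hx : -(1/2) ≤ x) :
    ∃ n : ℕ, x ∈ Icc ((n:ℝ) - 1/2) ((n:ℝ) + 1/2) := by
  refine ⟨⌊x + 1/2⌋₊, ?_, ?_⟩
  · have := Nat.floor_le (show (0:ℝ) ≤ x + 1/2 by linarith); linarith
  · have := Nat.lt_floor_add_one (x + 1/2); linarith

lemma Fmem (hf : IsTradeoffFn f) (hc : c ∈ Ico (0:ℝ) (1/2)) (hfc : f c = c)
    (hF : IsFfCon f c F) : ∀ x : ℝ, -(1/2) ≤ x → F x ∈ Icc c 1 := by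
  intro x hx
  obtain ⟨n, hn⟩ := exists_interval hx
  rw [rep hF hfc n x hn]
  exact iter_mem hf hc n _ (Lf_mem hc _ ⟨by linarith [hn.1], by linarith [hn.2]⟩)

lemma symmAux (hF : IsFfCon f c F) :
    ∀ n : ℕ, ∀ x ∈ Icc ((n:ℝ) - 1/2) ((n:ℝ) + 1/2), F (-x) = 1 - F x := by
  intro n
  induction n with
  | zero =>
    intro x hx
    simp only [Nat.cast_zero] at hx
    have hx' : x ∈ Icc (-(1/2):ℝ) (1/2) := by
      constructor <;> [linarith [hx.1]; linarith [hx.2]]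
    have hmx : -x ∈ Icc (-(1/2):ℝ) (1/2) := by
      constructor <;> [linarith [hx'.2]; linarith [hx'.1]]
    rw [hF.1 x hx', hF.1 (-x) hmx]; ring
  | succ n ih =>
    intro x hx
    push_cast at hx
    by_cases h2 : 1/2 < x
    · have hx1 : x - 1 ∈ Icc ((n:ℝ) - 1/2) ((n:ℝ) + 1/2) :=
        ⟨by linarith [hx.1], by linarith [hx.2]⟩
      have h3 : -x < -(1/2) := by linarith
      rw [hF.2.2 (-x) h3, hF.2.1 x h2]
      have heq : -x + 1 = -(x - 1) := by ring
      rw [heq, ih (x-1) hx1]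
      rw [sub_sub_cancel, sub_sub_cancel]
    · have hn : (n:ℝ) ≤ 0 := by linarith [hx.1]
      have hn0 : n = 0 := by exact_mod_cast le_antisymm hn (Nat.cast_nonneg n)
      subst hn0
      have hxe : x = 1/2 := le_antisymm (not_lt.mp h2) (by push_cast at hx; linarith [hx.1])
      subst hxe
      rw [hF.1 (1/2) (by norm_num), hF.1 (-(1/2)) (by norm_num)]
      ring

lemma Fsymm (hF : IsFfCon f c F) : ∀ x : ℝ, F x = 1 - F (-x) := by
  have h : ∀ x : ℝ, -(1/2) ≤ x → F (-x) = 1 - F x := by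
    intro x hx
    obtain ⟨n, hn⟩ := exists_interval hx
    exact symmAux hF n x hn
  intro x
  rcases le_total (-(1/2):ℝ) x with hx | hx
  · have := h x hx; linarith
  · have := h (-x) (by linarith)
    rw [neg_neg] at this; linarith

lemma monoIcc (hf : IsTradeoffFn f) (hc : c ∈ Ico (0:ℝ) (1/2)) (hfc : f c = c)
    (hF : IsFfCon f c F) (n : ℕ) :
    MonotoneOn F (Icc ((n:ℝ) - 1/2) ((n:ℝ) + 1/2)) := by
  intro x hx y hy hxy
  rw [rep hF hfc n x hx, rep hF hfc n y hy]
  exact iter_mono hf hc n _ (Lf_mem hc _ ⟨by linarith [hx.1], by linarith [hx.2]⟩) _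
    (Lf_mem hc _ ⟨by linarith [hy.1], by linarith [hy.2]⟩)
    (Lf_mono hc (by linarith))

lemma monoUpTo (hf : IsTradeoffFn f) (hc : c ∈ Ico (0:ℝ) (1/2)) (hfc : f c = c)
    (hF : IsFfCon f c F) :
    ∀ n : ℕ, MonotoneOn F (Icc (-(1/2):ℝ) ((n:ℝ) + 1/2)) := by
  intro n
  induction n with
  | zero =>
    intro x hx y hy hxy
    have h0 := monoIcc hf hc hfc hF 0
    simp only [Nat.cast_zero, zero_sub, zero_add] at h0 hx hy
    exact h0 hx hy hxy
  | succ n ih =>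
    intro x hx y hy hxy
    push_cast at hx hy
    have hmn := monoIcc hf hc hfc hF (n+1)
    push_cast at hmn
    by_cases hy2 : y ≤ (n:ℝ) + 1/2
    · exact ih ⟨hx.1, hxy.trans hy2⟩ ⟨hy.1, hy2⟩ hxy
    · have hy' : y ∈ Icc ((n:ℝ) + 1 - 1/2) ((n:ℝ) + 1 + 1/2) :=
        ⟨by linarith, by linarith [hy.2]⟩
      by_cases hx2 : (n:ℝ) + 1/2 ≤ x
      · exact hmn ⟨by linarith, by linarith [hx.2]⟩ hy' hxy
      · have hnn : (0:ℝ) ≤ (n:ℝ) := Nat.cast_nonneg n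
        calc F x ≤ F ((n:ℝ) + 1/2) :=
              ih ⟨hx.1, by linarith⟩ ⟨by linarith, le_refl _⟩ (by linarith)
          _ ≤ F y := hmn ⟨by linarith, by linarith⟩ hy' (by linarith)

lemma monoIci (hf : IsTradeoffFn f) (hc : c ∈ Ico (0:ℝ) (1/2)) (hfc : f c = c)
    (hF : IsFfCon f c F) : MonotoneOn F (Ici (-(1/2):ℝ)) := by
  intro x hx y hy hxy
  obtain ⟨n, hn⟩ := exists_interval (hy : -(1/2) ≤ y)
  exact monoUpTo hf hc hfc hF n ⟨hx, by linarith [hn.2]⟩ ⟨hy, hn.2⟩ hxy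

lemma Fmono (hf : IsTradeoffFn f) (hc : c ∈ Ico (0:ℝ) (1/2)) (hfc : f c = c)
    (hF : IsFfCon f c F) : Monotone F := by
  have hm := monoIci hf hc hfc hF
  have hs := Fsymm hF
  intro x y hxy
  by_cases hx : -(1/2) ≤ x
  · exact hm hx (by simp only [mem_Ici]; linarith) hxy
  · push_neg at hx
    by_cases hy : -(1/2) ≤ y
    · have h1 : F x ≤ F (-(1/2)) := by
        rw [hs x, hs (-(1/2))]
        have : F (-(-(1/2))) ≤ F (-x) :=
          hm (by norm_num) (by simp only [mem_Ici]; linarith) (by linarith)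
        linarith
      have h2 : F (-(1/2)) ≤ F y := hm (mem_Ici.mpr (le_refl _)) hy hy
      linarith
    · push_neg at hy
      rw [hs x, hs y]
      have : F (-y) ≤ F (-x) :=
        hm (by simp only [mem_Ici]; linarith) (by simp only [mem_Ici]; linarith)
          (by linarith)
      linarith

lemma contIcc (hf : IsTradeoffFn f) (hc : c ∈ Ico (0:ℝ) (1/2)) (hfc : f c = c)
    (hF : IsFfCon f c F) (n : ℕ) :
    ContinuousOn F (Icc ((n:ℝ) - 1/2) ((n:ℝ) + 1/2)) := by
  have h1 : ContinuousOn (fun x : ℝ => (Tf f)^[n] (Lf c (x - n)))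
      (Icc ((n:ℝ) - 1/2) ((n:ℝ) + 1/2)) := by
    refine ContinuousOn.comp (iter_cont hf hc n) ?_ ?_
    · apply Continuous.continuousOn
      unfold Lf
      fun_prop
    · intro x hx
      exact Lf_mem hc _ ⟨by linarith [hx.1], by linarith [hx.2]⟩
  exact h1.congr (fun x hx => rep hF hfc n x hx)

lemma contAt (hf : IsTradeoffFn f) (hc : c ∈ Ico (0:ℝ) (1/2)) (hfc : f c = c)
    (hF : IsFfCon f c F) {x : ℝ} (hx : -(1/2) < x) : ContinuousAt F x := by
  obtain ⟨n, hn⟩ := exists_interval hx.le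
  have hr : ContinuousWithinAt F (Ici x) x := by
    rcases eq_or_lt_of_le hn.2 with he | hlt
    · have h' := contIcc hf hc hfc hF (n+1)
      push_cast at h'
      refine (h' x ⟨by linarith [hn.2], by linarith⟩).mono_of_mem_nhdsWithin ?_
      exact Icc_mem_nhdsGE_of_mem ⟨by linarith, by linarith⟩
    · exact ((contIcc hf hc hfc hF n) x hn).mono_of_mem_nhdsWithin
        (Icc_mem_nhdsGE_of_mem ⟨hn.1, hlt⟩)
  have hl : ContinuousWithinAt F (Iic x) x := by
    rcases eq_or_lt_of_le hn.1 with he | hlt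
    · have hne : n ≠ 0 := by
        rintro rfl
        simp only [Nat.cast_zero, zero_sub] at he
        linarith
      obtain ⟨m, rfl⟩ := Nat.exists_eq_succ_of_ne_zero hne
      have h' := contIcc hf hc hfc hF m
      push_cast at he
      refine (h' x ⟨by linarith, by linarith⟩).mono_of_mem_nhdsWithin ?_
      exact Icc_mem_nhdsLE_of_mem ⟨by linarith, by linarith⟩
    · exact ((contIcc hf hc hfc hF n) x hn).mono_of_mem_nhdsWithin
        (Icc_mem_nhdsLE_of_mem ⟨hlt, hn.2⟩)
  have := hl.union hr
  rwa [Iic_union_Ici, continuousWithinAt_univ] at this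

lemma Fcont (hf : IsTradeoffFn f) (hc : c ∈ Ico (0:ℝ) (1/2)) (hfc : f c = c)
    (hF : IsFfCon f c F) : Continuous F := by
  rw [continuous_iff_continuousAt]
  intro x
  by_cases hx : -(1/2) < x
  · exact contAt hf hc hfc hF hx
  · push_neg at hx
    have hx' : -(1/2) < -x := by linarith
    have h1 : ContinuousAt (fun y : ℝ => 1 - F (-y)) x := by
      have h2 : ContinuousAt (fun y : ℝ => F (-y)) x :=
        (contAt hf hc hfc hF hx').comp (continuous_neg.continuousAt)
      exact continuousAt_const.sub h2
    have hFeq : F = fun y : ℝ => 1 - F (-y) := funext (Fsymm hF)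
    rw [hFeq]
    exact h1

end FfAux

/-- the construction `F_f` (linear on `[-1/2,1/2]` with fixed point `c`, extended
by the recurrences) is the cdf of a continuous real random variable symmetric about zero:
it takes values in `[0,1]`, is continuous, increasing, symmetric `F(x) = 1 - F(-x)`, and tends
to `0` at `-∞` and `1` at `+∞`. -/
theorem Ff_is_symmetric_continuous_cdf (f : ℝ → ℝ) (hf : IsTradeoffFn f) (hsym : SymmTF f)
    (hnt : NontrivialTF f) (c : ℝ) (hc : c ∈ Ico (0:ℝ) (1/2)) (hfc : f c = c)
    (F : ℝ → ℝ) (hF : IsFfCon f c F) :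
    (∀ x : ℝ, F x ∈ Icc (0:ℝ) 1) ∧ Continuous F ∧ Monotone F ∧
    (∀ x : ℝ, F x = 1 - F (-x)) ∧
    Filter.Tendsto F Filter.atBot (nhds 0) ∧ Filter.Tendsto F Filter.atTop (nhds 1) := by
  classical
  obtain ⟨hc0, hc2⟩ := hc
  have hcIco : c ∈ Ico (0:ℝ) (1/2) := ⟨hc0, hc2⟩
  have hsymF : ∀ x : ℝ, F x = 1 - F (-x) := FfAux.Fsymm hF
  have hmemF : ∀ x : ℝ, -(1/2) ≤ x → F x ∈ Icc c 1 := FfAux.Fmem hf hcIco hfc hF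
  have hrange : ∀ x : ℝ, F x ∈ Icc (0:ℝ) 1 := by
    intro x
    by_cases hx : -(1/2) ≤ x
    · exact FfAux.sub_Icc hcIco (hmemF x hx)
    · push_neg at hx
      have h := hmemF (-x) (by linarith)
      rw [hsymF x]
      constructor
      · linarith [h.2]
      · linarith [h.1, hc0]
  have hmonoF : Monotone F := FfAux.Fmono hf hcIco hfc hF
  have hcontF : Continuous F := FfAux.Fcont hf hcIco hfc hF
  -- the sequence a n = F(n + 1/2) tends to 1
  set a : ℕ → ℝ := fun n => (FfAux.Tf f)^[n] (1 - c) with ha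
  have hmem1c : (1 - c : ℝ) ∈ Icc c 1 := ⟨by linarith, by linarith⟩
  have hamem : ∀ n, a n ∈ Icc c 1 := fun n => FfAux.iter_mem hf hcIco n _ hmem1c
  have hasucc : ∀ n, a (n+1) = FfAux.Tf f (a n) := fun n =>
    Function.iterate_succ_apply' _ _ _
  have hamono : Monotone a := by
    apply monotone_nat_of_le_succ
    intro n
    rw [hasucc n]
    have h01 : a n ∈ Icc (0:ℝ) 1 := FfAux.sub_Icc hcIco (hamem n)
    have := hf.le_one_sub _ h01
    unfold FfAux.Tf
    linarith
  have habdd : BddAbove (Set.range a) := ⟨1, by rintro _ ⟨n, rfl⟩; exact (hamem n).2⟩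
  have haL : Filter.Tendsto a Filter.atTop (nhds (⨆ n, a n)) :=
    tendsto_atTop_ciSup hamono habdd
  set L := ⨆ n, a n with hLdef
  have hL1 : L ≤ 1 := ciSup_le fun n => (hamem n).2
  have hLge : 1 - c ≤ L := le_ciSup habdd 0
  have hL01 : L ∈ Icc (0:ℝ) 1 := ⟨by linarith, hL1⟩
  have hTL : FfAux.Tf f L = L := by
    have h1 : Filter.Tendsto (fun n => a (n+1)) Filter.atTop (nhds L) :=
      haL.comp (Filter.tendsto_add_atTop_nat 1)
    have h2 : Filter.Tendsto (fun n => FfAux.Tf f (a n)) Filter.atTop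
        (nhds (FfAux.Tf f L)) := by
      have hcw : ContinuousWithinAt (FfAux.Tf f) (Icc (0:ℝ) 1) L := by
        have : ContinuousOn (FfAux.Tf f) (Icc (0:ℝ) 1) := continuousOn_const.sub hf.cont
        exact this L hL01
      apply hcw.tendsto.comp
      apply tendsto_nhdsWithin_of_tendsto_nhds_of_eventually_within _ haL
      exact Filter.Eventually.of_forall (fun n => FfAux.sub_Icc hcIco (hamem n))
    refine tendsto_nhds_unique ?_ h1
    exact h2.congr (fun n => (hasucc n).symm)
  have hLeq : L = 1 := by
    by_contra hne
    have hlt : L < 1 := lt_of_le_of_ne hL1 hne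
    have hcL : c < L := by linarith
    have := FfAux.f_lt hf hcIco hfc ⟨hcL, hlt⟩
    unfold FfAux.Tf at hTL
    linarith
  have haF : ∀ n : ℕ, a n = F ((n:ℝ) + 1/2) := by
    intro n
    rw [FfAux.rep hF hfc n ((n:ℝ) + 1/2) ⟨by linarith, le_refl _⟩]
    have h1 : (n:ℝ) + 1/2 - n = 1/2 := by ring
    rw [h1]
    have h2 : FfAux.Lf c (1/2) = 1 - c := by unfold FfAux.Lf; ring
    rw [h2]
  have hFbdd : BddAbove (Set.range F) := ⟨1, by rintro _ ⟨x, rfl⟩; exact (hrange x).2⟩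
  have htop0 : Filter.Tendsto F Filter.atTop (nhds (⨆ x, F x)) :=
    tendsto_atTop_ciSup hmonoF hFbdd
  have hsup : (⨆ x, F x) = 1 := by
    refine le_antisymm (ciSup_le fun x => (hrange x).2) ?_
    rw [← hLeq]
    exact ciSup_le fun n => (haF n) ▸ le_ciSup hFbdd ((n:ℝ) + 1/2)
  rw [hsup] at htop0
  have hbot : Filter.Tendsto F Filter.atBot (nhds 0) := by
    have h2 : Filter.Tendsto (fun x : ℝ => F (-x)) Filter.atBot (nhds 1) :=
      htop0.comp Filter.tendsto_neg_atBot_atTop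
    have h1 : Filter.Tendsto (fun x : ℝ => 1 - F (-x)) Filter.atBot (nhds 0) := by
      have := Filter.Tendsto.sub
        (tendsto_const_nhds : Filter.Tendsto (fun _ : ℝ => (1:ℝ)) Filter.atBot (nhds 1)) h2
      simpa using this
    exact h1.congr (fun x => (hsymF x).symm)
  exact ⟨hrange, hcontF, hmonoF, hsymF, hbot, htop0⟩
end

section
/- Let f be a symmetric nontrivial tradeoff function and F_f the distribution constructed by the linear-on-[−1/2,1/2] recurrence. Then F_f is strictly increasing on the set {x : 0 < F_f(x) < 1}. -/
open MeasureTheory Set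

set_option maxHeartbeats 1000000

/-- the constructed `F_f` is strictly increasing on `{x : 0 < F_f x < 1}`. -/
theorem Ff_strictMonoOn (f : ℝ → ℝ) (hf : IsTradeoffFn f) (hsym : SymmTF f)
    (hnt : NontrivialTF f) (c : ℝ) (hc : c ∈ Ico (0:ℝ) (1/2)) (hfc : f c = c)
    (F : ℝ → ℝ) (hF : IsFfCon f c F) :
    StrictMonoOn F {x : ℝ | 0 < F x ∧ F x < 1} := by
  obtain ⟨hlin, hrec, hlec⟩ := hF
  obtain ⟨hc0, hc1⟩ := hc
  have hf1 : f 1 = 0 := by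
    have h1 := hf.le_one_sub 1 (by norm_num)
    have h2 := (hf.maps 1 (by norm_num)).1
    linarith
  -- f is strictly decreasing at points where it is positive
  have fstrict : ∀ s t : ℝ, 0 ≤ s → s < t → t ≤ 1 → 0 < f s → f t < f s := by
    intro s t hs hst ht hfs
    rcases eq_or_lt_of_le ht with rfl | ht1
    · rw [hf1]; exact hfs
    · have h1s : (0:ℝ) < 1 - s := by linarith
      have ha : (0:ℝ) ≤ (1 - t) / (1 - s) := by
        apply div_nonneg <;> linarith
      have hb : (0:ℝ) ≤ (t - s) / (1 - s) := by
        apply div_nonneg <;> linarith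
      have hab : (1 - t) / (1 - s) + (t - s) / (1 - s) = 1 := by
        rw [← add_div, div_eq_one_iff_eq (ne_of_gt h1s)]; ring
      have key := hf.convex.2 (⟨hs, by linarith⟩ : s ∈ Icc (0:ℝ) 1)
        (⟨by norm_num, le_refl 1⟩ : (1:ℝ) ∈ Icc (0:ℝ) 1) ha hb hab
      have heq : ((1 - t) / (1 - s)) • s + ((t - s) / (1 - s)) • (1:ℝ) = t := by
        rw [smul_eq_mul, smul_eq_mul, mul_one, div_mul_eq_mul_div, ← add_div,
          div_eq_iff (ne_of_gt h1s)]
        ring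
      rw [heq] at key
      simp only [smul_eq_mul, hf1, mul_zero, add_zero] at key
      have halt : (1 - t) / (1 - s) < 1 := by
        rw [div_lt_one h1s]; linarith
      calc f t ≤ (1 - t) / (1 - s) * f s := key
        _ < 1 * f s := by apply mul_lt_mul_of_pos_right halt hfs
        _ = f s := one_mul _
  have hc2 : (0:ℝ) < 1 - 2 * c := by linarith
  have Flin : ∀ x : ℝ, -(1/2) ≤ x → x ≤ 1/2 → F x = (1 - 2*c) * x + 1/2 := by
    intro x h1 h2
    rw [hlin x ⟨h1, h2⟩]; ring
  have Fhalf : F (1/2) = 1 - c := by rw [Flin (1/2) (by norm_num) (by norm_num)]; ring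
  have Fnhalf : F (-(1/2)) = c := by rw [Flin (-(1/2)) (by norm_num) (by norm_num)]; ring
  -- extended recurrences (valid at the closed boundary)
  have recR : ∀ x : ℝ, 1/2 ≤ x → F x = 1 - f (F (x - 1)) := by
    intro x hx
    rcases eq_or_lt_of_le hx with rfl | hx'
    · rw [Fhalf, show (1/2 : ℝ) - 1 = -(1/2) by norm_num, Fnhalf, hfc]
    · exact hrec x hx'
  have recL : ∀ x : ℝ, x ≤ -(1/2) → F x = f (1 - F (x + 1)) := by
    intro x hx
    rcases eq_or_lt_of_le hx with h | hx'
    · rw [h, Fnhalf, show (-(1/2) : ℝ) + 1 = 1/2 by norm_num, Fhalf,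
        show (1 : ℝ) - (1 - c) = c by ring, hfc]
    · exact hlec x hx'
  -- F has values in [0,1]
  have boundN : ∀ n : ℕ, ∀ x : ℝ, |x| ≤ n + 1/2 → 0 ≤ F x ∧ F x ≤ 1 := by
    intro n
    induction n with
    | zero =>
      intro x hx
      rw [abs_le] at hx
      push_cast at hx
      rw [Flin x (by linarith [hx.1]) (by linarith [hx.2])]
      constructor <;> nlinarith [hx.1, hx.2]
    | succ n ih =>
      intro x hx
      rw [abs_le] at hx
      push_cast at hx
      rcases le_or_gt x (-(n + 1/2)) with h | h
      · rw [recL x (by linarith [Nat.cast_nonneg (α := ℝ) n])]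
        have hprev := ih (x + 1) (by rw [abs_le]; constructor <;> linarith [hx.1])
        have := hf.maps (1 - F (x + 1)) ⟨by linarith [hprev.2], by linarith [hprev.1]⟩
        exact ⟨this.1, this.2⟩
      · rcases le_or_gt x (n + 1/2) with h2 | h2
        · exact ih x (by rw [abs_le]; exact ⟨by linarith, h2⟩)
        · rw [recR x (by linarith [Nat.cast_nonneg (α := ℝ) n])]
          have hprev := ih (x - 1) (by rw [abs_le]; constructor <;> linarith [hx.2])
          have := hf.maps (F (x - 1)) ⟨hprev.1, hprev.2⟩
          constructor <;> [linarith [this.2]; linarith [this.1]]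
  have bound : ∀ x : ℝ, 0 ≤ F x ∧ F x ≤ 1 := by
    intro x
    obtain ⟨n, hn⟩ := exists_nat_ge |x|
    exact boundN n x (by linarith)
  -- global monotonicity
  have monoN : ∀ n : ℕ, ∀ x y : ℝ, |x| ≤ n + 1/2 → |y| ≤ n + 1/2 → x ≤ y → F x ≤ F y := by
    intro n
    induction n with
    | zero =>
      intro x y hx hy hxy
      rw [abs_le] at hx hy
      push_cast at hx hy
      rw [Flin x (by linarith [hx.1]) (by linarith [hx.2]),
          Flin y (by linarith [hy.1]) (by linarith [hy.2])]
      nlinarith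
    | succ n ih =>
      intro x y hx hy hxy
      rw [abs_le] at hx hy
      push_cast at hx hy
      have hB0 : (0:ℝ) ≤ n + 1/2 := by positivity
      have hR : ∀ u v : ℝ, (n:ℝ) + 1/2 ≤ u → u ≤ v → v ≤ n + 1 + 1/2 → F u ≤ F v := by
        intro u v hu huv hv
        rw [recR u (by linarith), recR v (by linarith)]
        have h1 := ih (u - 1) (v - 1) (by rw [abs_le]; constructor <;> linarith)
          (by rw [abs_le]; constructor <;> linarith) (by linarith)
        have b1 := boundN n (u - 1) (by rw [abs_le]; constructor <;> linarith)
        have b2 := boundN n (v - 1) (by rw [abs_le]; constructor <;> linarith)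
        have := hf.anti ⟨b1.1, b1.2⟩ ⟨b2.1, b2.2⟩ h1
        linarith
      have hL : ∀ u v : ℝ, -(n + 1 + 1/2) ≤ u → u ≤ v → v ≤ -(n + 1/2) → F u ≤ F v := by
        intro u v hu huv hv
        rw [recL u (by linarith), recL v (by linarith)]
        have h1 := ih (u + 1) (v + 1) (by rw [abs_le]; constructor <;> linarith)
          (by rw [abs_le]; constructor <;> linarith) (by linarith)
        have b1 := boundN n (u + 1) (by rw [abs_le]; constructor <;> linarith)
        have b2 := boundN n (v + 1) (by rw [abs_le]; constructor <;> linarith)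
        exact hf.anti ⟨by linarith [b2.2], by linarith [b2.1]⟩
          ⟨by linarith [b1.2], by linarith [b1.1]⟩ (by linarith)
      have hM : ∀ u v : ℝ, |u| ≤ n + 1/2 → |v| ≤ n + 1/2 → u ≤ v → F u ≤ F v := ih
      have habsB : |-(n + 1/2 : ℝ)| ≤ n + 1/2 := by rw [abs_le]; constructor <;> linarith
      have habsB' : |(n + 1/2 : ℝ)| ≤ n + 1/2 := by rw [abs_le]; constructor <;> linarith
      rcases le_or_gt x (-(n + 1/2)) with h | h
      · rcases le_or_gt y (-(n + 1/2)) with h2 | h2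
        · exact hL x y (by linarith) hxy h2
        · have s1 : F x ≤ F (-(n + 1/2)) := hL x (-(n + 1/2)) (by linarith) h le_rfl
          rcases le_or_gt y (n + 1/2) with h3 | h3
          · exact s1.trans (hM (-(n + 1/2)) y habsB (by rw [abs_le]; exact ⟨by linarith, h3⟩)
              (by linarith))
          · exact s1.trans ((hM (-(n + 1/2)) (n + 1/2) habsB habsB' (by linarith)).trans
              (hR (n + 1/2) y le_rfl (by linarith) (by linarith)))
      · rcases le_or_gt x (n + 1/2) with h2 | h2
        · rcases le_or_gt y (n + 1/2) with h3 | h3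
          · exact hM x y (by rw [abs_le]; exact ⟨by linarith, h2⟩)
              (by rw [abs_le]; exact ⟨by linarith, h3⟩) hxy
          · exact (hM x (n + 1/2) (by rw [abs_le]; exact ⟨by linarith, h2⟩) habsB'
              (by linarith)).trans (hR (n + 1/2) y le_rfl (by linarith) (by linarith))
        · exact hR x y (by linarith) hxy (by linarith)
  have mono : Monotone F := by
    intro x y hxy
    obtain ⟨n, hn⟩ := exists_nat_ge (max |x| |y|)
    exact monoN n x y (by linarith [le_max_left |x| |y|]) (by linarith [le_max_right |x| |y|]) hxy
  -- positivity past -1/2, below one before 1/2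
  have pos : ∀ t : ℝ, -(1/2) < t → 0 < F t := by
    intro t ht
    rcases le_or_gt t (1/2) with h | h
    · rw [Flin t (by linarith) h]; nlinarith
    · have : F (1/2) ≤ F t := mono (by linarith)
      rw [Fhalf] at this; linarith
  have lt1 : ∀ t : ℝ, t < 1/2 → F t < 1 := by
    intro t ht
    rcases le_or_gt (-(1/2)) t with h | h
    · rw [Flin t h (by linarith)]; nlinarith
    · have : F t ≤ F (-(1/2)) := mono (by linarith)
      rw [Fnhalf] at this; linarith
  -- strict monotonicity on the good set, by band induction
  have strictN : ∀ n : ℕ, ∀ x y : ℝ, |x| ≤ n + 1/2 → |y| ≤ n + 1/2 → x < y →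
      0 < F y → F x < 1 → F x < F y := by
    intro n
    induction n with
    | zero =>
      intro x y hx hy hxy _ _
      rw [abs_le] at hx hy
      push_cast at hx hy
      rw [Flin x (by linarith [hx.1]) (by linarith [hx.2]),
          Flin y (by linarith [hy.1]) (by linarith [hy.2])]
      nlinarith
    | succ n ih =>
      intro x y hx hy hxy hy0 hx1
      rw [abs_le] at hx hy
      push_cast at hx hy
      have hB0 : (0:ℝ) ≤ n + 1/2 := by positivity
      -- strict on right band
      have sR : ∀ u v : ℝ, (n:ℝ) + 1/2 ≤ u → u < v → v ≤ n + 1 + 1/2 → F u < 1 → F u < F v := by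
        intro u v hu huv hv hu1
        rw [recR u (by linarith), recR v (by linarith)]
        rw [recR u (by linarith)] at hu1
        have hfs : 0 < f (F (u - 1)) := by linarith
        have bu := bound (u - 1)
        have bv := bound (v - 1)
        have hne : F (u - 1) < 1 := by
          rcases eq_or_lt_of_le bu.2 with h | h
          · rw [h, hf1] at hfs; linarith
          · exact h
        have hpos : 0 < F (v - 1) := pos (v - 1) (by linarith)
        have hst : F (u - 1) < F (v - 1) := ih (u - 1) (v - 1)
          (by rw [abs_le]; constructor <;> linarith)
          (by rw [abs_le]; constructor <;> linarith) (by linarith) hpos hne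
        have := fstrict (F (u - 1)) (F (v - 1)) bu.1 hst bv.2 hfs
        linarith
      -- strict on left band
      have sL : ∀ u v : ℝ, -(n + 1 + 1/2) ≤ u → u < v → v ≤ -(n + 1/2) → 0 < F v → F u < F v := by
        intro u v hu huv hv hv0
        rw [recL u (by linarith), recL v (by linarith)]
        rw [recL v (by linarith)] at hv0
        have bu := bound (u + 1)
        have bv := bound (v + 1)
        have hvpos : 0 < F (v + 1) := by
          rcases eq_or_lt_of_le bv.1 with h | h
          · rw [← h] at hv0
            rw [show (1 : ℝ) - 0 = 1 by ring, hf1] at hv0; linarith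
          · exact h
        have hult : F (u + 1) < 1 := lt1 (u + 1) (by linarith)
        have hst : F (u + 1) < F (v + 1) := ih (u + 1) (v + 1)
          (by rw [abs_le]; constructor <;> linarith)
          (by rw [abs_le]; constructor <;> linarith) (by linarith) hvpos hult
        have := fstrict (1 - F (v + 1)) (1 - F (u + 1)) (by linarith [bv.2])
          (by linarith) (by linarith [bu.1]) hv0
        linarith
      -- strict on middle extended right
      have sM : ∀ u v : ℝ, |u| ≤ n + 1/2 → u < v → v ≤ n + 1 + 1/2 → 0 < F v → F u < 1 →
          F u < F v := by
        intro u v hu huv hv hv0 hu1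
        rw [abs_le] at hu
        rcases le_or_gt v (n + 1/2) with h | h
        · exact ih u v (by rw [abs_le]; exact hu) (by rw [abs_le]; exact ⟨by linarith, h⟩)
            huv hv0 hu1
        · rcases eq_or_lt_of_le hu.2 with he | he
          · exact sR u v (le_of_eq he.symm) huv hv hu1
          · have s1 : F u < F (n + 1/2) := ih u (n + 1/2) (by rw [abs_le]; exact hu)
              (by rw [abs_le]; constructor <;> linarith) he
              (pos (n + 1/2) (by linarith)) hu1
            have s2 : F (n + 1/2) ≤ F v := mono (by linarith)
            linarith
      rcases le_or_gt x (-(n + 1/2)) with h | h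
      · rcases le_or_gt y (-(n + 1/2)) with h2 | h2
        · exact sL x y (by linarith) hxy h2 hy0
        · have s1 : F x ≤ F (-(n + 1/2)) := mono (by linarith)
          have s2 : F (-(n + 1/2)) < F y := sM (-(n + 1/2)) y
            (by rw [abs_le]; constructor <;> linarith) h2 (by linarith) hy0
            (lt1 (-(n + 1/2)) (by linarith))
          linarith
      · rcases le_or_gt x (n + 1/2) with h2 | h2
        · exact sM x y (by rw [abs_le]; exact ⟨by linarith, h2⟩) hxy (by linarith) hy0 hx1
        · exact sR x y (by linarith) hxy (by linarith) hx1
  intro x hx y hy hxy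
  obtain ⟨n, hn⟩ := exists_nat_ge (max |x| |y|)
  exact strictN n x y (by linarith [le_max_left |x| |y|]) (by linarith [le_max_right |x| |y|])
    hxy hy.1 hx.2
end

section
/- Let X be a real-valued continuous random variable with cdf F, symmetric about zero (F(x) = 1 − F(−x)), and let m > 0. Then T(X, X+m) = T(X+m, X), i.e., the tradeoff function for testing F(·) versus F(·−m) is symmetric in the order of the hypotheses. -/
open MeasureTheory Set

lemma rcdf_mono (μ : Measure ℝ) [IsProbabilityMeasure μ] : Monotone (rcdf μ) := by
  intro a b hab
  exact ENNReal.toReal_mono (measure_ne_top μ _) (measure_mono (Iic_subset_Iic.mpr hab))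

lemma noatom_of_cont (μ : Measure ℝ) [IsProbabilityMeasure μ]
    (hcont : Continuous (rcdf μ)) (a : ℝ) : μ {a} = 0 := by
  have key : ∀ ε > 0, (μ {a}).toReal < ε := by
    intro ε hε
    obtain ⟨δ, hδ, h⟩ := Metric.continuous_iff.mp hcont a ε hε
    set b := a - δ/2 with hb_def
    have hb : b < a := by simp only [hb_def]; linarith
    have hdist : dist b a < δ := by
      rw [Real.dist_eq]
      simp only [hb_def]
      rw [abs_of_nonpos (by linarith)]
      linarith
    have hsub : {a} ⊆ Iic a \ Iic b := by
      intro x hx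
      simp only [mem_singleton_iff] at hx
      subst hx
      exact ⟨self_mem_Iic, not_le.mpr hb⟩
    have h1 : μ {a} ≤ μ (Iic a \ Iic b) := measure_mono hsub
    have h2 : μ (Iic a \ Iic b) = μ (Iic a) - μ (Iic b) :=
      measure_diff (Iic_subset_Iic.mpr hb.le) measurableSet_Iic.nullMeasurableSet
        (measure_ne_top μ _)
    have h3 : (μ (Iic a \ Iic b)).toReal = rcdf μ a - rcdf μ b := by
      rw [h2, ENNReal.toReal_sub_of_le (measure_mono (Iic_subset_Iic.mpr hb.le))
        (measure_ne_top μ _)]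
      rfl
    have h4 : rcdf μ a - rcdf μ b < ε := by
      have := h b hdist
      rw [Real.dist_eq] at this
      have hmono := rcdf_mono μ hb.le
      rw [abs_of_nonpos (by linarith)] at this
      linarith
    calc (μ {a}).toReal ≤ (μ (Iic a \ Iic b)).toReal :=
          ENNReal.toReal_mono (measure_ne_top μ _) h1
      _ < ε := by rw [h3]; exact h4
  by_contra hne
  have hpos : 0 < (μ {a}).toReal :=
    ENNReal.toReal_pos hne (measure_ne_top μ _)
  exact absurd (key _ hpos) (lt_irrefl _)

lemma map_reflect (μ : Measure ℝ) [IsProbabilityMeasure μ]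
    (hcont : Continuous (rcdf μ)) (hsymm : ∀ x : ℝ, rcdf μ x = 1 - rcdf μ (-x))
    (m : ℝ) : μ.map (fun x => m - x) = μ.map (· + m) := by
  have hmeas1 : Measurable (fun x : ℝ => m - x) := (measurable_const.sub measurable_id)
  have hmeas2 : Measurable (fun x : ℝ => x + m) := (measurable_id.add measurable_const)
  haveI : IsProbabilityMeasure (μ.map (fun x => m - x)) :=
    Measure.isProbabilityMeasure_map hmeas1.aemeasurable
  haveI : IsProbabilityMeasure (μ.map (· + m)) :=
    Measure.isProbabilityMeasure_map hmeas2.aemeasurable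
  apply Measure.ext_of_Iic
  intro t
  rw [Measure.map_apply hmeas1 measurableSet_Iic,
      Measure.map_apply hmeas2 measurableSet_Iic]
  have hpre1 : (fun x : ℝ => m - x) ⁻¹' Iic t = Ici (m - t) := by
    ext x; simp only [mem_preimage, mem_Iic, mem_Ici]; constructor <;> intro <;> linarith
  have hpre2 : (fun x : ℝ => x + m) ⁻¹' Iic t = Iic (t - m) := by
    ext x; simp only [mem_preimage, mem_Iic]; constructor <;> intro <;> linarith
  rw [hpre1, hpre2]
  set y := m - t with hy
  have hty : t - m = -y := by rw [hy]; ring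
  rw [hty]
  have hsplit : Ici y = Ioi y ∪ {y} := by
    ext x
    simp only [mem_Ici, mem_Ioi, mem_union, mem_singleton_iff]
    constructor
    · intro h; exact (lt_or_eq_of_le h).imp id Eq.symm
    · rintro (h | rfl)
      · exact h.le
      · exact le_rfl
  have hIoi : μ (Ici y) = μ (Ioi y) := by
    apply le_antisymm
    · rw [hsplit]
      calc μ (Ioi y ∪ {y}) ≤ μ (Ioi y) + μ {y} := measure_union_le _ _
        _ = μ (Ioi y) := by rw [noatom_of_cont μ hcont y, add_zero]
    · exact measure_mono Ioi_subset_Ici_self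
  have hcompl : μ (Ioi y) = 1 - μ (Iic y) := by
    have : Ioi y = (Iic y)ᶜ := by ext x; simp
    rw [this, measure_compl measurableSet_Iic (measure_ne_top μ _), measure_univ]
  have hfin1 : μ (Ici y) ≠ ⊤ := measure_ne_top μ _
  have hfin2 : μ (Iic (-y)) ≠ ⊤ := measure_ne_top μ _
  rw [← ENNReal.toReal_eq_toReal_iff' hfin1 hfin2]
  have h1 : (μ (Ici y)).toReal = 1 - rcdf μ y := by
    rw [hIoi, hcompl, ENNReal.toReal_sub_of_le prob_le_one (by simp)]
    simp [rcdf]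
  rw [h1]
  have h2 := hsymm y
  show 1 - rcdf μ y = rcdf μ (-y)
  linarith

lemma tradeoff_swap_of_involution {P Q : Measure ℝ} (T : ℝ → ℝ) (hT : Measurable T)
    (hPQ : P.map T = Q) (hQP : Q.map T = P) (α : ℝ) :
    tradeoff P Q α = tradeoff Q P α := by
  have key : ∀ (P Q : Measure ℝ), P.map T = Q → Q.map T = P →
      {β : ℝ | ∃ φ : ℝ → ℝ, Measurable φ ∧ (∀ ω, φ ω ∈ Icc (0:ℝ) 1) ∧
        (∫ ω, φ ω ∂P) ≤ α ∧ β = 1 - ∫ ω, φ ω ∂Q} ⊆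
      {β : ℝ | ∃ φ : ℝ → ℝ, Measurable φ ∧ (∀ ω, φ ω ∈ Icc (0:ℝ) 1) ∧
        (∫ ω, φ ω ∂Q) ≤ α ∧ β = 1 - ∫ ω, φ ω ∂P} := by
    intro P Q hPQ hQP β hβ
    obtain ⟨φ, hφm, hφ01, hφP, hφQ⟩ := hβ
    refine ⟨φ ∘ T, hφm.comp hT, fun ω => hφ01 (T ω), ?_, ?_⟩
    · have h1 : ∫ ω, (φ ∘ T) ω ∂Q = ∫ y, φ y ∂(Q.map T) :=
        (integral_map hT.aemeasurable hφm.aestronglyMeasurable).symm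
      rw [h1, hQP]
      exact hφP
    · have h2 : ∫ ω, (φ ∘ T) ω ∂P = ∫ y, φ y ∂(P.map T) :=
        (integral_map hT.aemeasurable hφm.aestronglyMeasurable).symm
      rw [h2, hPQ]
      exact hφQ
  unfold tradeoff
  congr 1
  exact Set.Subset.antisymm (key P Q hPQ hQP) (key Q P hQP hPQ)

/-- for a continuous distribution on `ℝ` symmetric about zero and `m > 0`,
`T(X, X+m) = T(X+m, X)`. -/
theorem tradeoff_shift_symmetric (μ : Measure ℝ) (hμ : IsProbabilityMeasure μ)
    (hcont : Continuous (rcdf μ)) (hsymm : ∀ x : ℝ, rcdf μ x = 1 - rcdf μ (-x))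
    (m : ℝ) (hm : 0 < m) :
    ∀ α ∈ Icc (0:ℝ) 1, tradeoff μ (μ.map (· + m)) α = tradeoff (μ.map (· + m)) μ α := by
  intro α _
  have hT : Measurable (fun x : ℝ => m - x) := measurable_const.sub measurable_id
  have h1 : μ.map (fun x => m - x) = μ.map (· + m) := map_reflect μ hcont hsymm m
  have h2 : (μ.map (· + m)).map (fun x => m - x) = μ := by
    rw [Measure.map_map hT (measurable_add_const m)]
    have hc : (fun x => m - x) ∘ (· + m) = (fun x : ℝ => 0 - x) := by
      funext x; simp
    rw [hc, map_reflect μ hcont hsymm 0]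
    have hid : (fun x : ℝ => x + 0) = id := by funext x; simp
    show μ.map (fun x : ℝ => x + 0) = μ
    rw [hid, Measure.map_id]
  exact tradeoff_swap_of_involution _ hT h1 h2 α
end

section
/- Let f be a symmetric tradeoff function. A test φ: X^n → [0,1] satisfies f-DP (i.e., T(Bern(φ(x)), Bern(φ(x'))) ≥ f for all adjacent x, x') if and only if φ(x) ≤ 1 − f(φ(x')) for all x, x' ∈ X^n with Hamming distance H(x,x') ≤ 1. -/
open MeasureTheory Set

lemma fin_smul_dirac (c : ℝ) (b : Bool) : IsFiniteMeasure (ENNReal.ofReal c • Measure.dirac b) := by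
  constructor
  simp only [Measure.smul_apply, smul_eq_mul]
  exact ENNReal.mul_lt_top ENNReal.ofReal_lt_top (by simp)

lemma integral_bern (p : ℝ) (hp0 : 0 ≤ p) (hp1 : p ≤ 1) (ψ : Bool → ℝ) :
    ∫ ω, ψ ω ∂(bern p) = p * ψ true + (1 - p) * ψ false := by
  have i1 := fin_smul_dirac p true
  have i2 := fin_smul_dirac (1-p) false
  have h1 : Integrable ψ (ENNReal.ofReal p • Measure.dirac true) := Integrable.of_finite
  have h2 : Integrable ψ (ENNReal.ofReal (1-p) • Measure.dirac false) := Integrable.of_finite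
  rw [bern, integral_add_measure h1 h2, integral_smul_measure, integral_smul_measure,
      integral_dirac, integral_dirac, ENNReal.toReal_ofReal hp0,
      ENNReal.toReal_ofReal (by linarith)]
  simp [smul_eq_mul]

lemma ff_le (f : ℝ → ℝ) (hf : IsTradeoffFn f) (hsym : SymmTF f) {q : ℝ}
    (hq : q ∈ Icc (0:ℝ) 1) : f (f q) ≤ q := by
  rw [hsym (f q) (hf.maps q hq), tfInv]
  exact csInf_le ⟨0, fun t ht => ht.1.1⟩ ⟨hq, le_rfl⟩

lemma key_convex (f : ℝ → ℝ) (hf : IsTradeoffFn f) {p q a b : ℝ}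
    (hp : p ∈ Icc (0:ℝ) 1) (hq : q ∈ Icc (0:ℝ) 1)
    (h1 : f p ≤ 1 - q) (h2 : f (1 - p) ≤ q)
    (ha : a ∈ Icc (0:ℝ) 1) (hb : b ∈ Icc (0:ℝ) 1) :
    f (p * a + (1 - p) * b) ≤ 1 - (q * a + (1 - q) * b) := by
  obtain ⟨hp0, hp1⟩ := hp
  obtain ⟨ha0, ha1⟩ := ha
  obtain ⟨hb0, hb1⟩ := hb
  have m1 : (1 - p) * b ∈ Icc (0:ℝ) 1 :=
    ⟨mul_nonneg (by linarith) hb0, by nlinarith⟩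
  have m2 : p + (1 - p) * b ∈ Icc (0:ℝ) 1 :=
    ⟨by nlinarith, by nlinarith⟩
  have m0 : (0:ℝ) ∈ Icc (0:ℝ) 1 := ⟨le_rfl, by norm_num⟩
  have mone : (1:ℝ) ∈ Icc (0:ℝ) 1 := ⟨by norm_num, le_rfl⟩
  have mp : p ∈ Icc (0:ℝ) 1 := ⟨hp0, hp1⟩
  have m1p : 1 - p ∈ Icc (0:ℝ) 1 := ⟨by linarith, by linarith⟩
  have c1 := hf.convex.2 m1 m2 (by linarith : (0:ℝ) ≤ 1 - a) ha0 (by ring)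
  have c2 := hf.convex.2 m0 m1p (by linarith : (0:ℝ) ≤ 1 - b) hb0 (by ring)
  have c3 := hf.convex.2 mp mone (by linarith : (0:ℝ) ≤ 1 - b) hb0 (by ring)
  simp only [smul_eq_mul] at c1 c2 c3
  have e1 : (1 - a) * ((1 - p) * b) + a * (p + (1 - p) * b) = p * a + (1 - p) * b := by ring
  have e2 : (1 - b) * 0 + b * (1 - p) = (1 - p) * b := by ring
  have e3 : (1 - b) * p + b * 1 = p + (1 - p) * b := by ring
  rw [e1] at c1; rw [e2] at c2; rw [e3] at c3
  have A : f 0 ≤ 1 := (hf.maps 0 m0).2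
  have B : f 1 ≤ 0 := by have := hf.le_one_sub 1 mone; linarith
  have t1 : (1 - a) * f ((1 - p) * b) ≤ (1 - a) * ((1 - b) * f 0 + b * f (1 - p)) :=
    mul_le_mul_of_nonneg_left c2 (by linarith)
  have t2 : a * f (p + (1 - p) * b) ≤ a * ((1 - b) * f p + b * f 1) :=
    mul_le_mul_of_nonneg_left c3 ha0
  nlinarith [mul_le_mul_of_nonneg_left A (mul_nonneg (by linarith : (0:ℝ) ≤ 1-a) (by linarith : (0:ℝ) ≤ 1-b)),
    mul_le_mul_of_nonneg_left B (mul_nonneg ha0 hb0),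
    mul_le_mul_of_nonneg_left h1 (mul_nonneg ha0 (by linarith : (0:ℝ) ≤ 1-b)),
    mul_le_mul_of_nonneg_left h2 (mul_nonneg (by linarith : (0:ℝ) ≤ 1-a) hb0)]

/-- a test `φ : Xⁿ → [0,1]` satisfies `f`-DP (i.e. the mechanism
`Bern(φ(x))` satisfies `T(Bern(φ x), Bern(φ x')) ≥ f` for all adjacent databases)
iff `φ x ≤ 1 - f (φ x')` for all adjacent `x, x'`. -/
theorem fdp_test_iff {X : Type*} [DecidableEq X] {n : ℕ} (f : ℝ → ℝ)
    (hf : IsTradeoffFn f) (hsym : SymmTF f)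
    (φ : (Fin n → X) → ℝ) (hφ : ∀ x, φ x ∈ Icc (0:ℝ) 1) :
    (∀ x x' : Fin n → X, hammingDist x x' ≤ 1 →
        ∀ α ∈ Icc (0:ℝ) 1, f α ≤ tradeoff (bern (φ x)) (bern (φ x')) α) ↔
    (∀ x x' : Fin n → X, hammingDist x x' ≤ 1 → φ x ≤ 1 - f (φ x')) := by
  constructor
  · intro h x x' hxx'
    obtain ⟨hp0, hp1⟩ := hφ x
    obtain ⟨hq0, hq1⟩ := hφ x'
    have hadj' : hammingDist x' x ≤ 1 := by rwa [hammingDist_comm]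
    have h2 := h x' x hadj' (φ x') ⟨hq0, hq1⟩
    have hle : tradeoff (bern (φ x')) (bern (φ x)) (φ x') ≤ 1 - φ x := by
      apply csInf_le
      · refine ⟨0, ?_⟩
        rintro β ⟨ψ, hm, hψ, hint, rfl⟩
        rw [integral_bern (φ x) hp0 hp1 ψ]
        nlinarith [(hψ true).1, (hψ true).2, (hψ false).1, (hψ false).2]
      · refine ⟨fun ω => if ω then 1 else 0, measurable_of_countable _, ?_, ?_, ?_⟩
        · intro ω; cases ω <;> simp
        · rw [integral_bern (φ x') hq0 hq1]; simp
        · rw [integral_bern (φ x) hp0 hp1]; simp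
    linarith
  · intro h x x' hxx' α hα
    obtain ⟨hp0, hp1⟩ := hφ x
    obtain ⟨hq0, hq1⟩ := hφ x'
    have hadj' : hammingDist x' x ≤ 1 := by rwa [hammingDist_comm]
    have hpq : φ x ≤ 1 - f (φ x') := h x x' hxx'
    have hqp : φ x' ≤ 1 - f (φ x) := h x' x hadj'
    apply le_csInf
    · refine ⟨1, fun _ => 0, measurable_const, fun ω => ⟨le_rfl, by norm_num⟩, ?_, ?_⟩
      · rw [integral_bern (φ x) hp0 hp1]; simp; linarith [hα.1]
      · rw [integral_bern (φ x') hq0 hq1]; simp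
    · rintro β ⟨ψ, hm, hψ, hint, rfl⟩
      rw [integral_bern (φ x) hp0 hp1] at hint
      rw [integral_bern (φ x') hq0 hq1]
      set a := ψ true
      set b := ψ false
      obtain ⟨ha0, ha1⟩ := hψ true
      obtain ⟨hb0, hb1⟩ := hψ false
      have hE : φ x * a + (1 - φ x) * b ∈ Icc (0:ℝ) 1 := by
        constructor
        · have : 0 ≤ (1 - φ x) * b := mul_nonneg (by linarith) hb0
          nlinarith
        · nlinarith
      have step1 : f α ≤ f (φ x * a + (1 - φ x) * b) := hf.anti hE hα hint
      have hfq_mem := hf.maps (φ x') ⟨hq0, hq1⟩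
      have h2 : f (1 - φ x) ≤ φ x' := by
        have hd : f (1 - φ x) ≤ f (f (φ x')) :=
          hf.anti hfq_mem ⟨by linarith, by linarith⟩ (by linarith)
        have := ff_le f hf hsym (⟨hq0, hq1⟩ : φ x' ∈ Icc (0:ℝ) 1)
        linarith
      have step2 := key_convex f hf ⟨hp0, hp1⟩ ⟨hq0, hq1⟩ (by linarith) h2
        ⟨ha0, ha1⟩ ⟨hb0, hb1⟩
      linarith
end

section
/- Let P, Q, R be probability distributions and f, g tradeoff functions. If T(P,Q) ≥ f and T(Q,R) ≥ g, then T(P,R) ≥ g∘(1−f), where (g∘(1−f))(α) = g(1 − f(α)). -/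
open MeasureTheory Set

lemma test_integral_mem {Ω : Type*} [MeasurableSpace Ω] (Q : Measure Ω)
    (hQ : IsProbabilityMeasure Q)
    (φ : Ω → ℝ) (hm : Measurable φ) (hb : ∀ ω, φ ω ∈ Icc (0:ℝ) 1) :
    (∫ ω, φ ω ∂Q) ∈ Icc (0:ℝ) 1 := by
  have hint : Integrable φ Q := by
    refine (integrable_const (1:ℝ)).mono' hm.aestronglyMeasurable ?_
    filter_upwards with ω
    rw [Real.norm_eq_abs, abs_of_nonneg (hb ω).1]; exact (hb ω).2
  constructor
  · exact integral_nonneg fun ω => (hb ω).1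
  · calc (∫ ω, φ ω ∂Q) ≤ ∫ _, (1:ℝ) ∂Q :=
          integral_mono hint (integrable_const 1) fun ω => (hb ω).2
      _ = 1 := by simp

lemma tradeoff_bddBelow {Ω : Type*} [MeasurableSpace Ω] (P Q : Measure Ω)
    (hQ : IsProbabilityMeasure Q) (α : ℝ) :
    BddBelow {β : ℝ | ∃ φ : Ω → ℝ, Measurable φ ∧ (∀ ω, φ ω ∈ Icc (0:ℝ) 1) ∧
      (∫ ω, φ ω ∂P) ≤ α ∧ β = 1 - ∫ ω, φ ω ∂Q} := by
  refine ⟨0, ?_⟩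
  rintro β ⟨φ, hm, hb, -, rfl⟩
  have := (test_integral_mem Q hQ φ hm hb).2
  linarith

/-- if `T(P,Q) ≥ f` and `T(Q,R) ≥ g` then `T(P,R) ≥ g ∘ (1 - f)`. -/
theorem tradeoff_compose {Ω : Type*} [MeasurableSpace Ω] (P Q R : Measure Ω)
    (hP : IsProbabilityMeasure P) (hQ : IsProbabilityMeasure Q) (hR : IsProbabilityMeasure R)
    (f g : ℝ → ℝ) (hf : IsTradeoffFn f) (hg : IsTradeoffFn g)
    (h1 : ∀ α ∈ Icc (0:ℝ) 1, f α ≤ tradeoff P Q α)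
    (h2 : ∀ α ∈ Icc (0:ℝ) 1, g α ≤ tradeoff Q R α) :
    ∀ α ∈ Icc (0:ℝ) 1, g (1 - f α) ≤ tradeoff P R α := by
  intro α hα
  apply le_csInf
  · exact ⟨1, 0, measurable_const, fun ω => ⟨le_refl 0, zero_le_one⟩,
      by simpa using hα.1, by simp⟩
  rintro β ⟨φ, hm, hb, hPφ, rfl⟩
  have hQφ := test_integral_mem Q hQ φ hm hb
  have hRφ := test_integral_mem R hR φ hm hb
  have hfα := hf.maps α hα
  have h1' : f α ≤ 1 - ∫ ω, φ ω ∂Q :=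
    le_trans (h1 α hα) (csInf_le (tradeoff_bddBelow P Q hQ α) ⟨φ, hm, hb, hPφ, rfl⟩)
  have hmono : g (1 - f α) ≤ g (∫ ω, φ ω ∂Q) :=
    hg.anti hQφ ⟨by linarith [hfα.2], by linarith [hfα.1]⟩ (by linarith)
  have h2' : g (∫ ω, φ ω ∂Q) ≤ tradeoff Q R (∫ ω, φ ω ∂Q) := h2 _ hQφ
  have h3 : tradeoff Q R (∫ ω, φ ω ∂Q) ≤ 1 - ∫ ω, φ ω ∂(R) :=
    csInf_le (tradeoff_bddBelow Q R hR _) ⟨φ, hm, hb, le_refl _, rfl⟩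
  linarith
end

section
/- Let F be a CND for a tradeoff function f, and suppose F(a) = F(b) for some a < b in the interior of the support (−U, U) where U = −F⁻¹(0). Then F(a+1) = F(b+1) and F(a−1) = F(b−1): the flat regions of a CND recur at integer translates within the support. -/
open MeasureTheory Set

open Filter Topology in
private lemma cnd_flat_sub_one (f : ℝ → ℝ) (hf : IsTradeoffFn f) (μ : Measure ℝ)
    (hcnd : IsCND f μ) (a b : ℝ) (hab : a < b) (ha : 0 < rcdf μ a) (hb : rcdf μ b < 1)
    (heq : rcdf μ a = rcdf μ b) : rcdf μ (a - 1) = rcdf μ (b - 1) := by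
  have hprob := hcnd.prob
  set F := rcdf μ with hFdef
  have hmono : Monotone F := fun x y hxy =>
    ENNReal.toReal_mono (measure_ne_top μ _) (measure_mono (Iic_subset_Iic.2 hxy))
  set p := F a with hp
  have hp1 : p < 1 := heq ▸ hb
  have hcf : ∀ q ∈ Ioo (0:ℝ) 1, f (1 - q) = F (quantileFn F q - 1) := by
    intro q hq
    have h1 : (1 - q) ∈ Ioo (0:ℝ) 1 := ⟨by linarith [hq.2], by linarith [hq.1]⟩
    have h2 := (hcnd.tight _ h1).trans (hcnd.closedForm _ h1)
    simpa using h2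
  have htop : Tendsto F atTop (𝓝 1) := by
    have h := tendsto_measure_Iic_atTop μ
    rw [measure_univ] at h
    have h2 := (ENNReal.tendsto_toReal (by norm_num : (1:ENNReal) ≠ ⊤)).comp h
    exact (by simpa [Function.comp_def] using h2 : Tendsto (fun x => (μ (Iic x)).toReal) atTop (𝓝 1))
  have hbot : Tendsto F atBot (𝓝 0) := by
    have h2 : Tendsto (fun x : ℝ => 1 - F (-x)) atBot (𝓝 (1 - 1)) := by
      exact (tendsto_const_nhds.sub (htop.comp tendsto_neg_atBot_atTop))
    have h3 : (fun x : ℝ => 1 - F (-x)) = F := by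
      funext x; rw [← hcnd.symm x]
    rw [h3] at h2
    simpa using h2
  have hub : ∀ q ∈ Ioo p 1, F (b - 1) ≤ f (1 - q) := by
    intro q hq
    rw [hcf q ⟨lt_trans ha hq.1, hq.2⟩]
    apply hmono
    have hbQ : b ≤ quantileFn F q := by
      apply le_csInf
      · obtain ⟨x, hx⟩ := (htop.eventually_const_lt hq.2).exists
        exact ⟨x, le_of_lt hx⟩
      · intro y hy
        by_contra hyb
        push_neg at hyb
        have h4 : F y ≤ p := heq ▸ hmono hyb.le
        exact absurd (le_trans hy h4) (not_le.2 hq.1)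
    linarith
  have hle1 : F (b - 1) ≤ f (1 - p) := by
    have hcont : ContinuousWithinAt f (Icc 0 1) (1 - p) :=
      hf.cont _ ⟨by linarith, by linarith⟩
    have hmap : Tendsto (fun q : ℝ => 1 - q) (𝓝[>] p) (𝓝[Icc (0:ℝ) 1] (1 - p)) := by
      apply tendsto_nhdsWithin_of_tendsto_nhds_of_eventually_within
      · exact (continuous_const.sub continuous_id).continuousAt.tendsto.mono_left
          nhdsWithin_le_nhds
      · filter_upwards [Ioo_mem_nhdsGT_of_mem ⟨le_refl p, hp1⟩] with q hq
        exact ⟨by linarith [hq.2], by linarith [hq.1, ha]⟩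
    have htend : Tendsto (fun q : ℝ => f (1 - q)) (𝓝[>] p) (𝓝 (f (1 - p))) :=
      hcont.tendsto.comp hmap
    refine ge_of_tendsto htend ?_
    filter_upwards [Ioo_mem_nhdsGT_of_mem ⟨le_refl p, hp1⟩] with q hq
    exact hub q hq
  have hQa : quantileFn F p ≤ a := by
    obtain ⟨x₀, hx₀⟩ := (hbot.eventually_lt_const ha).exists
    apply csInf_le
    · exact ⟨x₀, fun y hy => le_of_not_gt fun hyx =>
        absurd (le_trans hy (hmono hyx.le)) (not_le.2 hx₀)⟩
    · show p ≤ F a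
      exact le_refl p
  have hle2 : f (1 - p) ≤ F (a - 1) := by
    rw [hcf p ⟨ha, hp1⟩]
    exact hmono (by linarith)
  have hmba : F (a - 1) ≤ F (b - 1) := hmono (by linarith)
  linarith

/-- flat regions of a CND recur at integer translates within the interior of
the support: if `F a = F b` with `a < b` strictly inside the support (`0 < F a` and `F b < 1`),
then `F (a+1) = F (b+1)` and `F (a-1) = F (b-1)`. -/
theorem cnd_flat_translates (f : ℝ → ℝ) (hf : IsTradeoffFn f) (hsym : SymmTF f)
    (hnt : NontrivialTF f) (μ : Measure ℝ) (hcnd : IsCND f μ)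
    (a b : ℝ) (hab : a < b) (ha : 0 < rcdf μ a) (hb : rcdf μ b < 1)
    (heq : rcdf μ a = rcdf μ b) :
    rcdf μ (a + 1) = rcdf μ (b + 1) ∧ rcdf μ (a - 1) = rcdf μ (b - 1) := by
  have hsymm := hcnd.symm
  have hsub : rcdf μ (-b - 1) = rcdf μ (-a - 1) := by
    apply cnd_flat_sub_one f hf μ hcnd (-b) (-a) (by linarith)
    · rw [hsymm]; simpa using hb
    · rw [hsymm]; simpa using ha
    · rw [hsymm (-b), hsymm (-a), neg_neg, neg_neg, heq]
  constructor
  · have h1 := hsymm (a + 1)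
    have h2 := hsymm (b + 1)
    rw [show -(a+1) = -a - 1 by ring] at h1
    rw [show -(b+1) = -b - 1 by ring] at h2
    rw [h1, h2, hsub]
  · exact cnd_flat_sub_one f hf μ hcnd a b hab ha hb heq
end
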